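/- arXiv:2311.14538 — 7 statements merged into one kernel-verified Lean document; each statement's English description precedes it below -/
import Mathlib

section
/- If G : X → ℝ ∪ {+∞} is convex and x ∈ dom G, then the function h ↦ G^↓(x;h) is convex as a map X → [−∞,+∞], i.e. G^↓(x; λh₁ + (1−λ)h₂) ≤ λ G^↓(x;h₁) + (1−λ) G^↓(x;h₂) for all h₁, h₂ ∈ X and λ ∈ (0,1), where the right-hand side is evaluated with the convention ∞ + (−∞) := (−∞) + ∞ := ∞. -/
open Filter Topology

noncomputable section

/-- weak-* convergence of a sequence in the dual space `X = Y*`: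
`⟨w, h_k⟩ → ⟨w, h⟩` for all `w ∈ Y`. -/
def WeakStarConv {Y : Type*} [NormedAddCommGroup Y] [NormedSpace ℝ Y]
    (v : ℕ → StrongDual ℝ Y) (h : StrongDual ℝ Y) : Prop :=
  ∀ w : Y, Tendsto (fun k => v k w) atTop (𝓝 (h w))

/-- The weak-* first subderivative `G^↓(x; h)`. -/
def firstSub {Y : Type*} [NormedAddCommGroup Y] [NormedSpace ℝ Y]
    (G : StrongDual ℝ Y → EReal) (x h : StrongDual ℝ Y) : EReal :=
  sInf { L : EReal | ∃ (t : ℕ → ℝ) (v : ℕ → StrongDual ℝ Y),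
    (∀ k, 0 < t k) ∧ Tendsto t atTop (𝓝 0) ∧ WeakStarConv v h ∧
    L = liminf (fun k => (((t k)⁻¹ : ℝ) : EReal) * (G (x + t k • v k) - G x)) atTop }

/-- The weak-* second subderivative `G''(x, w; h)`. -/
def secondSub {Y : Type*} [NormedAddCommGroup Y] [NormedSpace ℝ Y]
    (G : StrongDual ℝ Y → EReal) (x : StrongDual ℝ Y) (w : Y)
    (h : StrongDual ℝ Y) : EReal :=
  sInf { L : EReal | ∃ (t : ℕ → ℝ) (v : ℕ → StrongDual ℝ Y),
    (∀ k, 0 < t k) ∧ Tendsto t atTop (𝓝 0) ∧ WeakStarConv v h ∧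
    L = liminf (fun k =>
      ((2 / (t k) ^ 2 : ℝ) : EReal) *
        (G (x + t k • v k) - G x - ((t k * v k w : ℝ) : EReal))) atTop }

/-- Convexity of an `ℝ ∪ {+∞}`-valued function (values in `EReal`, never `⊥`). -/
def ERealConvex {X : Type*} [AddCommGroup X] [Module ℝ X] (G : X → EReal) : Prop :=
  ∀ z₁ z₂ : X, ∀ a b : ℝ, 0 < a → 0 < b → a + b = 1 →
    G (a • z₁ + b • z₂) ≤ (a : EReal) * G z₁ + (b : EReal) * G z₂

lemma coe_mul_ne_bot {lam : ℝ} (h : 0 < lam) {q : EReal} (hq : q ≠ ⊥) :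
    (lam : EReal) * q ≠ ⊥ := by
  induction q using EReal.rec with
  | bot => exact absurd rfl hq
  | coe r => rw [← EReal.coe_mul]; exact EReal.coe_ne_bot _
  | top => rw [EReal.coe_mul_top_of_pos h]; simp

section Aux
variable {Y : Type*} [NormedAddCommGroup Y] [NormedSpace ℝ Y]

/-- difference quotient -/
def myQ (G : StrongDual ℝ Y → EReal) (x : StrongDual ℝ Y)
    (t : ℝ) (v : StrongDual ℝ Y) : EReal :=
  ((t⁻¹ : ℝ) : EReal) * (G (x + t • v) - G x)

variable {G : StrongDual ℝ Y → EReal} {x : StrongDual ℝ Y} {gx : ℝ}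

lemma myQ_ne_bot (hGbot : ∀ z, G z ≠ ⊥) (hgx : G x = (gx : ℝ)) {t : ℝ} (ht : 0 < t)
    (v : StrongDual ℝ Y) : myQ G x t v ≠ ⊥ := by
  unfold myQ
  rw [hgx]
  rcases eq_or_ne (G (x + t • v)) ⊤ with h | h
  · rw [h, EReal.top_sub_coe, EReal.coe_mul_top_of_pos (by positivity)]
    simp
  · lift G (x + t • v) to ℝ using ⟨h, hGbot _⟩ with c
    rw [← EReal.coe_sub, ← EReal.coe_mul]
    exact EReal.coe_ne_bot _

lemma myQ_mono (hGconv : ERealConvex G) (hGbot : ∀ z, G z ≠ ⊥) (hgx : G x = (gx : ℝ))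
    {s t : ℝ} (hs : 0 < s) (hst : s ≤ t) (v : StrongDual ℝ Y) :
    myQ G x s v ≤ myQ G x t v := by
  have ht : 0 < t := lt_of_lt_of_le hs hst
  rcases eq_or_lt_of_le hst with rfl | hlt
  · exact le_rfl
  unfold myQ
  rw [hgx]
  rcases eq_or_ne (G (x + t • v)) ⊤ with h | h
  · rw [h, EReal.top_sub_coe, EReal.coe_mul_top_of_pos (by positivity)]
    exact le_top
  lift G (x + t • v) to ℝ using ⟨h, hGbot _⟩ with c hc
  have hdiv0 : 0 < s / t := by positivity
  have hdiv1 : 0 < 1 - s / t := by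
    have : s / t < 1 := (div_lt_one ht).mpr hlt
    linarith
  have hkey := hGconv (x + t • v) x (s / t) (1 - s / t) hdiv0 hdiv1 (by ring)
  have hpt : (s / t) • (x + t • v) + (1 - s / t) • x = x + s • v := by
    rw [smul_add, smul_smul, div_mul_cancel₀ _ ht.ne']
    module
  rw [hpt, ← hc, hgx] at hkey
  have hkey2 : G (x + s • v) ≤ ((s / t * c + (1 - s / t) * gx : ℝ) : EReal) :=
    le_trans hkey (le_of_eq (by push_cast; ring))
  have hne : G (x + s • v) ≠ ⊤ := ne_top_of_le_ne_top (EReal.coe_ne_top _) hkey2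
  lift G (x + s • v) to ℝ using ⟨hne, hGbot _⟩ with d hd
  rw [EReal.coe_le_coe_iff] at hkey2
  have : s⁻¹ * (d - gx) ≤ t⁻¹ * (c - gx) := by
    calc s⁻¹ * (d - gx) ≤ s⁻¹ * ((s / t * c + (1 - s / t) * gx) - gx) :=
          mul_le_mul_of_nonneg_left (by linarith) (by positivity)
      _ = t⁻¹ * (c - gx) := by field_simp; ring
  exact_mod_cast this

lemma myQ_convex (hGconv : ERealConvex G) (hGbot : ∀ z, G z ≠ ⊥) (hgx : G x = (gx : ℝ))
    {t lam mu : ℝ} (ht : 0 < t) (hlam : 0 < lam) (hmu : 0 < mu) (hsum : lam + mu = 1)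
    (v₁ v₂ : StrongDual ℝ Y) :
    myQ G x t (lam • v₁ + mu • v₂) ≤
      (lam : EReal) * myQ G x t v₁ + (mu : EReal) * myQ G x t v₂ := by
  rcases eq_or_ne (G (x + t • v₁)) ⊤ with h1 | h1
  · have htop : (lam : EReal) * myQ G x t v₁ = ⊤ := by
      unfold myQ
      rw [h1, hgx, EReal.top_sub_coe, EReal.coe_mul_top_of_pos (by positivity),
        EReal.coe_mul_top_of_pos (by exact_mod_cast hlam)]
    rw [htop, EReal.top_add_of_ne_bot (coe_mul_ne_bot hmu (myQ_ne_bot hGbot hgx ht v₂))]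
    exact le_top
  rcases eq_or_ne (G (x + t • v₂)) ⊤ with h2 | h2
  · have htop : (mu : EReal) * myQ G x t v₂ = ⊤ := by
      unfold myQ
      rw [h2, hgx, EReal.top_sub_coe, EReal.coe_mul_top_of_pos (by positivity),
        EReal.coe_mul_top_of_pos (by exact_mod_cast hmu)]
    rw [htop, EReal.add_top_of_ne_bot (coe_mul_ne_bot hlam (myQ_ne_bot hGbot hgx ht v₁))]
    exact le_top
  unfold myQ
  rw [hgx]
  lift G (x + t • v₁) to ℝ using ⟨h1, hGbot _⟩ with c₁ hc₁
  lift G (x + t • v₂) to ℝ using ⟨h2, hGbot _⟩ with c₂ hc₂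
  have hkey := hGconv (x + t • v₁) (x + t • v₂) lam mu hlam hmu hsum
  have hone : (lam + mu) • x = x := by rw [hsum, one_smul]
  have hpt : lam • (x + t • v₁) + mu • (x + t • v₂) = x + t • (lam • v₁ + mu • v₂) := by
    conv_rhs => rw [← hone]
    module
  rw [hpt, ← hc₁, ← hc₂] at hkey
  have hkey2 : G (x + t • (lam • v₁ + mu • v₂)) ≤ ((lam * c₁ + mu * c₂ : ℝ) : EReal) :=
    le_trans hkey (le_of_eq (by push_cast; ring))
  have hne : G (x + t • (lam • v₁ + mu • v₂)) ≠ ⊤ :=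
    ne_top_of_le_ne_top (EReal.coe_ne_top _) hkey2
  lift G (x + t • (lam • v₁ + mu • v₂)) to ℝ using ⟨hne, hGbot _⟩ with d hd
  rw [EReal.coe_le_coe_iff] at hkey2
  have : t⁻¹ * (d - gx) ≤ lam * (t⁻¹ * (c₁ - gx)) + mu * (t⁻¹ * (c₂ - gx)) := by
    have h3 : t⁻¹ * (d - gx) ≤ t⁻¹ * ((lam * c₁ + mu * c₂) - gx) :=
      mul_le_mul_of_nonneg_left (by linarith) (by positivity)
    have h4 : t⁻¹ * ((lam * c₁ + mu * c₂) - gx) =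
        lam * (t⁻¹ * (c₁ - gx)) + mu * (t⁻¹ * (c₂ - gx)) := by
      linear_combination (t⁻¹ * gx) * hsum
    linarith
  exact_mod_cast this


lemma core (hGconv : ERealConvex G) (hGbot : ∀ z, G z ≠ ⊥) (hgx : G x = (gx : ℝ))
    (h₁ h₂ : StrongDual ℝ Y) {lam : ℝ} (hl0 : 0 < lam) (hl1 : lam < 1)
    (a b : ℝ) (ha : firstSub G x h₁ < (a : ℝ)) (hb : firstSub G x h₂ < (b : ℝ)) :
    firstSub G x (lam • h₁ + (1 - lam) • h₂) ≤ ((lam * a + (1 - lam) * b : ℝ) : EReal) := by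
  set mu := 1 - lam with hmudef
  have hmu : 0 < mu := by simp [hmudef]; linarith
  have hsum : lam + mu = 1 := by simp [hmudef]
  obtain ⟨L₁, hL₁mem, hL₁⟩ := sInf_lt_iff.mp ha
  obtain ⟨t₁, v₁, ht₁pos, ht₁0, hv₁, rfl⟩ := hL₁mem
  obtain ⟨L₂, hL₂mem, hL₂⟩ := sInf_lt_iff.mp hb
  obtain ⟨t₂, v₂, ht₂pos, ht₂0, hv₂, rfl⟩ := hL₂mem
  have hf₁ : ∃ᶠ k in atTop, myQ G x (t₁ k) (v₁ k) < (a : ℝ) :=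
    frequently_lt_of_liminf_lt (by isBoundedDefault) hL₁
  have hf₂ : ∃ᶠ k in atTop, myQ G x (t₂ k) (v₂ k) < (b : ℝ) :=
    frequently_lt_of_liminf_lt (by isBoundedDefault) hL₂
  obtain ⟨φ, hφ, hφP⟩ := Filter.extraction_of_frequently_atTop hf₁
  obtain ⟨ψ, hψ, hψP⟩ := Filter.extraction_of_frequently_atTop hf₂
  set T : ℕ → ℝ := fun k => min (t₁ (φ k)) (t₂ (ψ k)) with hT
  set V : ℕ → StrongDual ℝ Y := fun k => lam • v₁ (φ k) + mu • v₂ (ψ k) with hVdef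
  have hTpos : ∀ k, 0 < T k := fun k => lt_min (ht₁pos _) (ht₂pos _)
  have hT0 : Tendsto T atTop (𝓝 0) :=
    tendsto_of_tendsto_of_tendsto_of_le_of_le tendsto_const_nhds
      (ht₁0.comp hφ.tendsto_atTop) (fun k => (hTpos k).le) (fun k => min_le_left _ _)
  have hV : WeakStarConv V (lam • h₁ + mu • h₂) := by
    intro w
    have e : ∀ k, V k w = lam * (v₁ (φ k) w) + mu * (v₂ (ψ k) w) := by
      intro k
      simp [hVdef, ContinuousLinearMap.add_apply, ContinuousLinearMap.coe_smul',
        Pi.smul_apply, smul_eq_mul]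
    have etarget : (lam • h₁ + mu • h₂) w = lam * h₁ w + mu * h₂ w := by
      simp [ContinuousLinearMap.add_apply, ContinuousLinearMap.coe_smul',
        Pi.smul_apply, smul_eq_mul]
    rw [etarget]
    simp only [e]
    exact (((hv₁ w).comp hφ.tendsto_atTop).const_mul lam).add
      (((hv₂ w).comp hψ.tendsto_atTop).const_mul mu)
  have hmem : firstSub G x (lam • h₁ + mu • h₂) ≤
      liminf (fun k => myQ G x (T k) (V k)) atTop := by
    apply sInf_le
    exact ⟨T, V, hTpos, hT0, hV, rfl⟩
  refine le_trans hmem ?_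
  have hbd : ∀ k, myQ G x (T k) (V k) ≤ ((lam * a + mu * b : ℝ) : EReal) := by
    intro k
    have hlamE : (0 : EReal) ≤ (lam : EReal) := by exact_mod_cast hl0.le
    have hmuE : (0 : EReal) ≤ (mu : EReal) := by exact_mod_cast hmu.le
    calc myQ G x (T k) (V k)
        ≤ (lam : EReal) * myQ G x (T k) (v₁ (φ k)) +
            (mu : EReal) * myQ G x (T k) (v₂ (ψ k)) :=
          myQ_convex hGconv hGbot hgx (hTpos k) hl0 hmu hsum _ _
      _ ≤ (lam : EReal) * myQ G x (t₁ (φ k)) (v₁ (φ k)) +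
            (mu : EReal) * myQ G x (t₂ (ψ k)) (v₂ (ψ k)) :=
          add_le_add
            (mul_le_mul_of_nonneg_left
              (myQ_mono hGconv hGbot hgx (hTpos k) (min_le_left _ _) _) hlamE)
            (mul_le_mul_of_nonneg_left
              (myQ_mono hGconv hGbot hgx (hTpos k) (min_le_right _ _) _) hmuE)
      _ ≤ (lam : EReal) * (a : ℝ) + (mu : EReal) * (b : ℝ) :=
          add_le_add (mul_le_mul_of_nonneg_left (hφP k).le hlamE)
            (mul_le_mul_of_nonneg_left (hψP k).le hmuE)
      _ = ((lam * a + mu * b : ℝ) : EReal) := by push_cast; ring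
  calc liminf (fun k => myQ G x (T k) (V k)) atTop
      ≤ liminf (fun _ => ((lam * a + mu * b : ℝ) : EReal)) atTop :=
        liminf_le_liminf (Eventually.of_forall hbd)
    _ = ((lam * a + mu * b : ℝ) : EReal) := liminf_const _

end Aux

lemma ereal_le_of_forall_real {C y : EReal} (h : ∀ r : ℝ, y < (r : ℝ) → C ≤ (r : ℝ)) :
    C ≤ y := by
  by_contra hc
  push_neg at hc
  obtain ⟨r, hyr, hrC⟩ := EReal.exists_between_coe_real hc
  exact absurd (h r hyr) (not_le.mpr hrC)

lemma ereal_cases (z : EReal) (hz : z ≠ ⊤) : z = ⊥ ∨ ∃ z' : ℝ, z = (z' : ℝ) := by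
  induction z using EReal.rec with
  | bot => exact Or.inl rfl
  | coe z' => exact Or.inr ⟨z', rfl⟩
  | top => exact absurd rfl hz


/-- If `G` is convex and `x ∈ dom G`, then `h ↦ G^↓(x; h)` is convex, where the
right-hand side is evaluated with the convention `∞ + (-∞) := (-∞) + ∞ := ∞`
(so the inequality holds trivially whenever one of the two subderivatives is `+∞`). -/
theorem stmt2 {Y : Type*} [NormedAddCommGroup Y] [NormedSpace ℝ Y]
    (G : StrongDual ℝ Y → EReal) (hGbot : ∀ z, G z ≠ ⊥)
    (hGconv : ERealConvex G)
    (x : StrongDual ℝ Y) (hx : G x ≠ ⊤) :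
    ∀ h₁ h₂ : StrongDual ℝ Y, ∀ lam : ℝ, 0 < lam → lam < 1 →
      firstSub G x h₁ = ⊤ ∨ firstSub G x h₂ = ⊤ ∨
      firstSub G x (lam • h₁ + (1 - lam) • h₂) ≤
        (lam : EReal) * firstSub G x h₁ + ((1 - lam : ℝ) : EReal) * firstSub G x h₂ := by
  intro h₁ h₂ lam hl0 hl1
  rcases eq_or_ne (firstSub G x h₁) ⊤ with hA | hA
  · exact Or.inl hA
  rcases eq_or_ne (firstSub G x h₂) ⊤ with hB | hB
  · exact Or.inr (Or.inl hB)
  right; right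
  have hgx : G x = (((G x).toReal : ℝ) : EReal) := (EReal.coe_toReal hx (hGbot x)).symm
  set gx := (G x).toReal
  have hmu : 0 < 1 - lam := by linarith
  set A := firstSub G x h₁ with hAdef
  set B := firstSub G x h₂ with hBdef
  apply ereal_le_of_forall_real
  intro r hr
  suffices hab : ∃ a b : ℝ, A < (a : ℝ) ∧ B < (b : ℝ) ∧ lam * a + (1 - lam) * b ≤ r by
    obtain ⟨a, b, ha, hb, hle⟩ := hab
    exact le_trans (core hGconv hGbot hgx h₁ h₂ hl0 hl1 a b ha hb) (by exact_mod_cast hle)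
  rcases ereal_cases A hA with hA' | ⟨A', hA'⟩ <;> rcases ereal_cases B hB with hB' | ⟨B', hB'⟩
  · -- A = ⊥, B = ⊥
    refine ⟨r, r, ?_, ?_, by linarith⟩
    · rw [hA']; exact EReal.bot_lt_coe _
    · rw [hB']; exact EReal.bot_lt_coe _
  · -- A = ⊥, B = B'
    refine ⟨(r - (1 - lam) * (B' + 1)) / lam, B' + 1, ?_, ?_, ?_⟩
    · rw [hA']; exact EReal.bot_lt_coe _
    · rw [hB']; exact_mod_cast (by linarith : B' < B' + 1)
    · rw [mul_comm lam, div_mul_cancel₀ _ hl0.ne']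
      linarith
  · -- A = A', B = ⊥
    refine ⟨A' + 1, (r - lam * (A' + 1)) / (1 - lam), ?_, ?_, ?_⟩
    · rw [hA']; exact_mod_cast (by linarith : A' < A' + 1)
    · rw [hB']; exact EReal.bot_lt_coe _
    · rw [mul_comm (1 - lam), div_mul_cancel₀ _ hmu.ne']
      linarith
  · -- both real
    have hry : lam * A' + (1 - lam) * B' < r := by
      rw [hA', hB'] at hr
      exact_mod_cast hr
    set δ := r - (lam * A' + (1 - lam) * B') with hδ
    have hδpos : 0 < δ := by linarith
    refine ⟨A' + δ, B' + δ, ?_, ?_, by nlinarith⟩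
    · rw [hA']; exact_mod_cast (by linarith : A' < A' + δ)
    · rw [hB']; exact_mod_cast (by linarith : B' < B' + δ)

end
end

section
/- Let G : X → ℝ ∪ {+∞} be convex and x ∈ dom G. Suppose that the directional derivative G'(x;·) : X → [−∞,+∞], G'(x;h) := lim_{t↓0} (G(x + t h) − G(x))/t, is sequentially weak-* lower semicontinuous. Then G'(x;h) = G^↓(x;h) for all h ∈ X. -/
open Filter Topology

noncomputable section

lemma quot_mono {X : Type*} [AddCommGroup X] [Module ℝ X]
    (G : X → EReal) (hGbot : ∀ z, G z ≠ ⊥) (hGconv : ERealConvex G)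
    (x : X) (hx : G x ≠ ⊤) (h : X) {s t : ℝ} (hs : 0 < s) (hst : s < t) :
    ((s⁻¹ : ℝ) : EReal) * (G (x + s • h) - G x) ≤ ((t⁻¹ : ℝ) : EReal) * (G (x + t • h) - G x) := by
  have ht : 0 < t := hs.trans hst
  set c : ℝ := (G x).toReal with hcdef
  have hc : ((c : ℝ) : EReal) = G x := EReal.coe_toReal hx (hGbot x)
  by_cases hA : G (x + t • h) = ⊤
  · rw [hA, ← hc, EReal.top_sub_coe, EReal.coe_mul_top_of_pos (by positivity)]
    exact le_top
  · set a : ℝ := (G (x + t • h)).toReal with hadef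
    have ha : ((a : ℝ) : EReal) = G (x + t • h) := EReal.coe_toReal hA (hGbot _)
    have hα : (0:ℝ) < s / t := by positivity
    have hβ : (0:ℝ) < 1 - s / t := by
      have : s / t < 1 := (div_lt_one ht).mpr hst
      linarith
    have hcomb : (s/t) • (x + t • h) + (1 - s/t) • x = x + s • h := by
      rw [smul_add, smul_smul, div_mul_cancel₀ s ht.ne']
      module
    have hconv := hGconv (x + t • h) x (s/t) (1 - s/t) hα hβ (by ring)
    rw [hcomb, ← ha, ← hc] at hconv
    have hconv' : G (x + s • h) ≤ (((s/t) * a + (1 - s/t) * c : ℝ) : EReal) := by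
      push_cast
      exact hconv
    have hBtop : G (x + s • h) ≠ ⊤ := (hconv'.trans_lt (EReal.coe_lt_top _)).ne
    set b : ℝ := (G (x + s • h)).toReal with hbdef
    have hb : ((b : ℝ) : EReal) = G (x + s • h) := EReal.coe_toReal hBtop (hGbot _)
    have hbr : b ≤ (s/t) * a + (1 - s/t) * c := by
      rw [← EReal.coe_le_coe_iff, hb]; exact hconv'
    rw [← hb, ← ha, ← hc, ← EReal.coe_sub, ← EReal.coe_sub, ← EReal.coe_mul, ← EReal.coe_mul,
      EReal.coe_le_coe_iff]
    have h1 : b - c ≤ (s/t) * (a - c) := by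
      have : (s/t) * (a - c) = (s/t)*a + (1 - s/t)*c - c := by ring
      rw [this]; linarith
    calc s⁻¹ * (b - c) ≤ s⁻¹ * ((s/t) * (a - c)) :=
          mul_le_mul_of_nonneg_left h1 (by positivity)
      _ = t⁻¹ * (a - c) := by field_simp

/-- If `G` is convex, `x ∈ dom G`, and the directional derivative `G'(x; ·)`
(the limit of the difference quotients, with values in `[-∞, ∞]`) is sequentially
weak-* lower semicontinuous, then `G'(x; h) = G^↓(x; h)` for all `h`. -/
theorem stmt4 {Y : Type*} [NormedAddCommGroup Y] [NormedSpace ℝ Y]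
    (G : StrongDual ℝ Y → EReal) (hGbot : ∀ z, G z ≠ ⊥)
    (hGconv : ERealConvex G)
    (x : StrongDual ℝ Y) (hx : G x ≠ ⊤)
    (G' : StrongDual ℝ Y → EReal)
    (hG' : ∀ h : StrongDual ℝ Y,
      Tendsto (fun t : ℝ => ((t⁻¹ : ℝ) : EReal) * (G (x + t • h) - G x))
        (𝓝[>] (0 : ℝ)) (𝓝 (G' h)))
    (hlsc : ∀ (v : ℕ → StrongDual ℝ Y) (h : StrongDual ℝ Y),
      WeakStarConv v h → G' h ≤ liminf (fun k => G' (v k)) atTop) :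
    ∀ h : StrongDual ℝ Y, G' h = firstSub G x h := by
  intro h
  have key : ∀ (g : StrongDual ℝ Y) {t : ℝ}, 0 < t →
      G' g ≤ ((t⁻¹ : ℝ) : EReal) * (G (x + t • g) - G x) := by
    intro g t ht
    refine le_of_tendsto (hG' g) ?_
    filter_upwards [Ioo_mem_nhdsGT_of_mem (Set.left_mem_Ico.mpr ht)] with s hs
    exact quot_mono G hGbot hGconv x hx g hs.1 hs.2
  apply le_antisymm
  · refine le_sInf ?_
    rintro L ⟨t, v, htpos, htlim, hv, rfl⟩
    calc G' h ≤ liminf (fun k => G' (v k)) atTop := hlsc v h hv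
      _ ≤ _ := liminf_le_liminf (Eventually.of_forall fun k => key (v k) (htpos k))
  · set t : ℕ → ℝ := fun k => 1 / (k + 1) with htdef
    have h1 : ∀ k, 0 < t k := fun k => by positivity
    have h2 : Tendsto t atTop (𝓝 0) := tendsto_one_div_add_atTop_nhds_zero_nat
    have h4 : Tendsto t atTop (𝓝[>] (0:ℝ)) :=
      tendsto_nhdsWithin_of_tendsto_nhds_of_eventually_within _ h2
        (Eventually.of_forall fun k => h1 k)
    have h5 := (hG' h).comp h4
    refine sInf_le ⟨t, fun _ => h, h1, h2, fun w => tendsto_const_nhds, ?_⟩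
    exact h5.liminf_eq.symm

end
end

section
/- (Sum rule for the first subderivative.) Let G = g₁ + g₂ with g₁, g₂ : X → ℝ ∪ {+∞} and x ∈ dom G. Then G^↓(x;h) ≥ g₁^↓(x;h) + g₂^↓(x;h) for all h ∈ X for which the right-hand side is not of the form ∞ + (−∞) or (−∞) + ∞. If, additionally, X is reflexive, g₁ is convex and Lipschitz continuous in a neighborhood of x, and g₂ is strongly (once) epi-differentiable at x (i.e. for every h ∈ X and every sequence t_k ↓ 0 there exists a sequence h_k → h in norm with g₂^↓(x;h) = lim_{k→∞} (g₂(x + t_k h_k) − g₂(x))/t_k), then G^↓(x;h) = g₁^↓(x;h) + g₂^↓(x;h) for all h ∈ X. -/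
open Filter Topology

noncomputable section

/-- Weak convergence of a sequence in a normed space:
`ψ(h_k) → ψ(h)` for every continuous linear functional `ψ`. -/
def WeakConv {X : Type*} [NormedAddCommGroup X] [NormedSpace ℝ X]
    (v : ℕ → X) (h : X) : Prop :=
  ∀ ψ : X →L[ℝ] ℝ, Tendsto (fun k => ψ (v k)) atTop (𝓝 (ψ h))

/-- The weak first subderivative `g^↓(x; h)`. -/
def weakFirstSub {X : Type*} [NormedAddCommGroup X] [NormedSpace ℝ X]
    (g : X → EReal) (x h : X) : EReal :=
  sInf { L : EReal | ∃ (t : ℕ → ℝ) (v : ℕ → X),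
    (∀ k, 0 < t k) ∧ Tendsto t atTop (𝓝 0) ∧ WeakConv v h ∧
    L = liminf (fun k => (((t k)⁻¹ : ℝ) : EReal) * (g (x + t k • v k) - g x)) atTop }

/-- Reflexivity of a normed space: the canonical embedding into the double dual
is surjective. -/
def IsReflexiveSpace (X : Type*) [NormedAddCommGroup X] [NormedSpace ℝ X] : Prop :=
  Function.Surjective (NormedSpace.inclusionInDoubleDual ℝ X)

/-- `g` is strongly (once) epi-differentiable at `x`: for every `h` and every positive
null sequence `t_k` there is a strongly convergent sequence `h_k → h` realizing
`g^↓(x; h)` as a limit of difference quotients. -/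
def StronglyOnceEpiDiff {X : Type*} [NormedAddCommGroup X] [NormedSpace ℝ X]
    (g : X → EReal) (x : X) : Prop :=
  ∀ h : X, ∀ t : ℕ → ℝ, (∀ k, 0 < t k) → Tendsto t atTop (𝓝 0) →
    ∃ v : ℕ → X, Tendsto v atTop (𝓝 h) ∧
      Tendsto (fun k => (((t k)⁻¹ : ℝ) : EReal) * (g (x + t k • v k) - g x)) atTop
        (𝓝 (weakFirstSub g x h))

lemma ereal_quot_split (r : ℝ) (hr : 0 < r) (a b : EReal) (ha : a ≠ ⊥) (hb : b ≠ ⊥) (c d : ℝ) :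
    (r : EReal) * ((a + b) - ((c : EReal) + (d : EReal))) =
      (r : EReal) * (a - (c : EReal)) + (r : EReal) * (b - (d : EReal)) := by
  induction a using EReal.rec with
  | bot => exact absurd rfl ha
  | top =>
    induction b using EReal.rec with
    | bot => exact absurd rfl hb
    | top =>
      simp [← EReal.coe_add, EReal.top_sub_coe, EReal.coe_mul_top_of_pos hr]
    | coe y =>
      rw [EReal.top_add_coe, ← EReal.coe_add, EReal.top_sub_coe, EReal.top_sub_coe,
        ← EReal.coe_sub, ← EReal.coe_mul, EReal.coe_mul_top_of_pos hr, EReal.top_add_coe]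
  | coe z =>
    induction b using EReal.rec with
    | bot => exact absurd rfl hb
    | top =>
      rw [EReal.coe_add_top, ← EReal.coe_add, EReal.top_sub_coe, EReal.top_sub_coe,
        ← EReal.coe_sub, ← EReal.coe_mul, EReal.coe_mul_top_of_pos hr, EReal.coe_add_top]
    | coe y => norm_cast; ring
lemma sum_rule_ge {X : Type*} [NormedAddCommGroup X] [NormedSpace ℝ X]
    (g₁ g₂ : X → EReal) (hg₁bot : ∀ z, g₁ z ≠ ⊥) (hg₂bot : ∀ z, g₂ z ≠ ⊥)
    (x : X) (hx₁ : g₁ x ≠ ⊤) (hx₂ : g₂ x ≠ ⊤) (h : X) :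
    weakFirstSub g₁ x h + weakFirstSub g₂ x h ≤
      weakFirstSub (fun z => g₁ z + g₂ z) x h := by
  obtain ⟨c₁, hc₁⟩ : ∃ r : ℝ, g₁ x = (r : EReal) := by
    lift g₁ x to ℝ using ⟨hx₁, hg₁bot x⟩ with r hr
    exact ⟨r, rfl⟩
  obtain ⟨c₂, hc₂⟩ : ∃ r : ℝ, g₂ x = (r : EReal) := by
    lift g₂ x to ℝ using ⟨hx₂, hg₂bot x⟩ with r hr
    exact ⟨r, rfl⟩
  refine le_sInf ?_
  rintro L ⟨t, v, htp, ht0, hw, rfl⟩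
  set A : ℕ → EReal := fun k => (((t k)⁻¹ : ℝ) : EReal) * (g₁ (x + t k • v k) - g₁ x) with hA
  set B : ℕ → EReal := fun k => (((t k)⁻¹ : ℝ) : EReal) * (g₂ (x + t k • v k) - g₂ x) with hB
  have hsplit : (fun k => (((t k)⁻¹ : ℝ) : EReal) *
      ((fun z => g₁ z + g₂ z) (x + t k • v k) - (fun z => g₁ z + g₂ z) x)) = fun k => A k + B k := by
    funext k
    simp only [hA, hB, hc₁, hc₂]
    exact ereal_quot_split _ (inv_pos.2 (htp k)) _ _ (hg₁bot _) (hg₂bot _) c₁ c₂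
  rw [hsplit]
  have h1 : weakFirstSub g₁ x h ≤ liminf A atTop := sInf_le ⟨t, v, htp, ht0, hw, by rw [hA, hc₁]⟩
  have h2 : weakFirstSub g₂ x h ≤ liminf B atTop := sInf_le ⟨t, v, htp, ht0, hw, by rw [hB, hc₂]⟩
  calc weakFirstSub g₁ x h + weakFirstSub g₂ x h ≤ liminf A atTop + liminf B atTop :=
        add_le_add h1 h2
    _ ≤ liminf (A + B) atTop := EReal.le_liminf_add
    _ = liminf (fun k => A k + B k) atTop := rfl

set_option maxHeartbeats 1000000 in
lemma convex_part {X : Type*} [NormedAddCommGroup X] [NormedSpace ℝ X]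
    {g₁ : X → EReal} (hconv : ERealConvex g₁) (hbot : ∀ z, g₁ z ≠ ⊥)
    {x : X} {δ : ℝ} (hδ : 0 < δ) {K : NNReal} {f : X → ℝ}
    (hfg : ∀ z ∈ Metric.ball x δ, g₁ z = ((f z : ℝ) : EReal))
    (hK : LipschitzOnWith K f (Metric.ball x δ)) (h : X) :
    ∃ p : ℝ, weakFirstSub g₁ x h = (p : EReal) ∧
      ∀ t : ℕ → ℝ, (∀ k, 0 < t k) → Tendsto t atTop (𝓝 0) →
        ∀ v : ℕ → X, Tendsto v atTop (𝓝 h) →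
          Tendsto (fun k => (((t k)⁻¹ : ℝ) : EReal) * (g₁ (x + t k • v k) - g₁ x)) atTop
            (𝓝 ((p : ℝ) : EReal)) := by
  have hxball : x ∈ Metric.ball x δ := Metric.mem_ball_self hδ
  have hgx : g₁ x = ((f x : ℝ) : EReal) := hfg x hxball
  -- the cutoff
  set τ : X → ℝ := fun v => δ / (2 * (‖v‖ + 1)) with hτ
  have hτpos : ∀ v, 0 < τ v := fun v => by
    have : (0:ℝ) < ‖v‖ + 1 := by positivity
    exact div_pos hδ (by linarith)
  have hball : ∀ (v : X) (t : ℝ), 0 < t → t ≤ τ v → x + t • v ∈ Metric.ball x δ := by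
    intro v t ht htτ
    rw [Metric.mem_ball, dist_eq_norm, add_sub_cancel_left, norm_smul, Real.norm_eq_abs,
      abs_of_pos ht]
    have h1 : (0:ℝ) < ‖v‖ + 1 := by positivity
    have h2 : t * ‖v‖ ≤ τ v * ‖v‖ := mul_le_mul_of_nonneg_right htτ (norm_nonneg v)
    have h3 : τ v * ‖v‖ < δ := by
      rw [hτ]
      rw [div_mul_eq_mul_div, div_lt_iff₀ (by linarith : (0:ℝ) < 2 * (‖v‖ + 1))]
      nlinarith [norm_nonneg v]
    linarith
  -- the real difference quotient
  set q : X → ℝ → ℝ := fun v t => (f (x + t • v) - f x) / t with hq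
  -- convexity of f on the ball
  have fconv : ∀ z₁ ∈ Metric.ball x δ, ∀ z₂ ∈ Metric.ball x δ, ∀ a b : ℝ,
      0 < a → 0 < b → a + b = 1 → f (a • z₁ + b • z₂) ≤ a * f z₁ + b * f z₂ := by
    intro z₁ hz₁ z₂ hz₂ a b ha hb hab
    have hmem : a • z₁ + b • z₂ ∈ Metric.ball x δ :=
      (convex_ball x δ) hz₁ hz₂ ha.le hb.le hab
    have := hconv z₁ z₂ a b ha hb hab
    rw [hfg _ hmem, hfg _ hz₁, hfg _ hz₂] at this
    exact_mod_cast this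
  -- monotonicity of the quotient
  have qmono : ∀ (v : X) (s t : ℝ), 0 < s → s ≤ t → t ≤ τ v → q v s ≤ q v t := by
    intro v s t hs hst htτ
    rcases eq_or_lt_of_le hst with rfl | hlt
    · exact le_rfl
    have ht : 0 < t := hs.trans hlt
    have ha : 0 < s / t := div_pos hs ht
    have hb : 0 < 1 - s / t := by
      rw [sub_pos]
      exact (div_lt_one ht).2 hlt
    have hcomb : (s / t) • (x + t • v) + (1 - s / t) • x = x + s • v := by
      have hst' : s / t * t = s := div_mul_cancel₀ s ht.ne'
      rw [smul_add, smul_smul, hst']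
      module
    have key := fconv (x + t • v) (hball v t ht htτ) x hxball (s / t) (1 - s / t) ha hb
      (by ring)
    rw [hcomb] at key
    have key2 : f (x + s • v) * t ≤ s * f (x + t • v) + (t - s) * f x := by
      have := mul_le_mul_of_nonneg_right key ht.le
      have e : (s / t * f (x + t • v) + (1 - s / t) * f x) * t
          = s * f (x + t • v) + (t - s) * f x := by
        field_simp
      linarith [e ▸ this]
    rw [hq]
    rw [div_le_div_iff₀ hs ht]
    nlinarith [key2]
  -- two-sided Lipschitz bound on the quotient
  have qbnd : ∀ (v : X) (t : ℝ), 0 < t → t ≤ τ v → |q v t| ≤ (K : ℝ) * ‖v‖ := by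
    intro v t ht htτ
    have hz : x + t • v ∈ Metric.ball x δ := hball v t ht htτ
    have hd := hK.dist_le_mul _ hz _ hxball
    rw [Real.dist_eq] at hd
    rw [dist_eq_norm, add_sub_cancel_left, norm_smul, Real.norm_eq_abs, abs_of_pos ht] at hd
    rw [hq]
    rw [abs_div, abs_of_pos ht, div_le_iff₀ ht]
    calc |f (x + t • v) - f x| ≤ (K : ℝ) * (t * ‖v‖) := hd
      _ = (K : ℝ) * ‖v‖ * t := by ring
  -- the directional derivative p
  set S : X → Set ℝ := fun v => q v '' Set.Ioc 0 (τ v) with hS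
  have hSne : ∀ v, (S v).Nonempty := fun v => ⟨q v (τ v), ⟨τ v, ⟨hτpos v, le_rfl⟩, rfl⟩⟩
  have hSbdd : ∀ v, BddBelow (S v) := by
    intro v
    refine ⟨-((K : ℝ) * ‖v‖), ?_⟩
    rintro y ⟨t, ⟨ht, htτ⟩, rfl⟩
    exact neg_le_of_abs_le (qbnd v t ht htτ)
  set p : X → ℝ := fun v => sInf (S v) with hp
  have hple : ∀ (v : X) (t : ℝ), 0 < t → t ≤ τ v → p v ≤ q v t := by
    intro v t ht htτ
    exact csInf_le (hSbdd v) ⟨t, ⟨ht, htτ⟩, rfl⟩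
  have hpub : ∀ v, p v ≤ (K : ℝ) * ‖v‖ := fun v =>
    (hple v (τ v) (hτpos v) le_rfl).trans (le_of_abs_le (qbnd v (τ v) (hτpos v) le_rfl))
  -- convergence of quotients to p
  have ptend : ∀ v, Tendsto (q v) (𝓝[>] (0:ℝ)) (𝓝 (p v)) := by
    intro v
    rw [tendsto_order]
    constructor
    · intro a ha
      filter_upwards [Ioc_mem_nhdsGT_of_mem (Set.left_mem_Ico.2 (hτpos v))] with t ht
      exact lt_of_lt_of_le ha (hple v t ht.1 ht.2)
    · intro b hb
      obtain ⟨y, ⟨t₀, ⟨ht₀, ht₀τ⟩, rfl⟩, hy⟩ := exists_lt_of_csInf_lt (hSne v) hb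
      filter_upwards [Ioc_mem_nhdsGT_of_mem (Set.left_mem_Ico.2 ht₀)] with t ht
      exact lt_of_le_of_lt (qmono v t t₀ ht.1 ht.2 ht₀τ) hy
  have pzero : p 0 = 0 := by
    have hq0 : q 0 = fun _ : ℝ => (0:ℝ) := by
      funext t
      simp [hq]
    exact tendsto_nhds_unique (hq0 ▸ ptend 0) tendsto_const_nhds
  -- positive homogeneity
  have psmul : ∀ (c : ℝ), 0 < c → ∀ v, p (c • v) = c * p v := by
    intro c hc v
    have hmap : Tendsto (fun t : ℝ => c * t) (𝓝[>] 0) (𝓝[>] 0) := by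
      rw [tendsto_nhdsWithin_iff]
      constructor
      · have : Tendsto (fun t : ℝ => c * t) (𝓝 0) (𝓝 (c * 0)) :=
          (continuous_const.mul continuous_id).tendsto 0
        rw [mul_zero] at this
        exact this.mono_left nhdsWithin_le_nhds
      · filter_upwards [self_mem_nhdsWithin] with t ht
        exact mul_pos hc ht
    have h2 : q (c • v) = fun t => c * q v (c * t) := by
      funext t
      rw [hq]
      simp only [smul_smul, mul_comm t c]
      rw [mul_div_assoc']
      rw [show c * (f (x + (c * t) • v) - f x) / (c * t)
          = (f (x + (c * t) • v) - f x) / t from mul_div_mul_left _ t hc.ne']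
    have h3 : Tendsto (fun t : ℝ => c * q v (c * t)) (𝓝[>] (0:ℝ)) (𝓝 (c * p v)) :=
      ((ptend v).comp hmap).const_mul c
    exact tendsto_nhds_unique (h2 ▸ ptend (c • v)) h3
  -- subadditivity
  have padd : ∀ v w, p (v + w) ≤ p v + p w := by
    intro v w
    have hmap2 : Tendsto (fun t : ℝ => 2 * t) (𝓝[>] 0) (𝓝[>] 0) := by
      rw [tendsto_nhdsWithin_iff]
      constructor
      · have : Tendsto (fun t : ℝ => 2 * t) (𝓝 0) (𝓝 (2 * 0)) :=
          (continuous_const.mul continuous_id).tendsto 0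
        rw [mul_zero] at this
        exact this.mono_left nhdsWithin_le_nhds
      · filter_upwards [self_mem_nhdsWithin] with t ht
        exact mul_pos two_pos (Set.mem_Ioi.1 ht)
    have hrhs : Tendsto (fun t : ℝ => q v (2 * t) + q w (2 * t)) (𝓝[>] (0:ℝ))
        (𝓝 (p v + p w)) :=
      ((ptend v).comp hmap2).add ((ptend w).comp hmap2)
    refine le_of_tendsto_of_tendsto (ptend (v + w)) hrhs ?_
    have hm : 0 < min (τ (v + w)) (min (τ v / 2) (τ w / 2)) :=
      lt_min (hτpos _) (lt_min (by linarith [hτpos v]) (by linarith [hτpos w]))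
    filter_upwards [Ioc_mem_nhdsGT_of_mem (Set.left_mem_Ico.2 hm)] with t ht
    obtain ⟨ht0, htm⟩ := ht
    have h2t : 0 < 2 * t := by linarith
    have htv : 2 * t ≤ τ v := by
      have := htm.trans (min_le_right _ _)
      have := this.trans (min_le_left _ _)
      linarith
    have htw : 2 * t ≤ τ w := by
      have := htm.trans (min_le_right _ _)
      have := this.trans (min_le_right _ _)
      linarith
    have key := fconv (x + (2 * t) • v) (hball v _ h2t htv) (x + (2 * t) • w)
      (hball w _ h2t htw) (1/2) (1/2) (by norm_num) (by norm_num) (by norm_num)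
    have hcomb : (1/2 : ℝ) • (x + (2 * t) • v) + (1/2 : ℝ) • (x + (2 * t) • w)
        = x + t • (v + w) := by
      module
    rw [hcomb] at key
    show q (v + w) t ≤ q v (2 * t) + q w (2 * t)
    simp only [hq]
    rw [div_add_div _ _ h2t.ne' h2t.ne', div_le_div_iff₀ ht0 (by positivity : (0:ℝ) < 2 * t * (2 * t))]
    nlinarith [key, mul_le_mul_of_nonneg_right key h2t.le]
  -- Hahn-Banach functional
  obtain ⟨ψl, hψle, hψh⟩ : ∃ ψl : X →ₗ[ℝ] ℝ, (∀ v, ψl v ≤ p v) ∧ ψl h = p h := by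
    have hdomle : ∀ (c : ℝ), c * p h ≤ p (c • h) := by
      intro c
      rcases lt_trichotomy c 0 with hcneg | rfl | hcpos
      · have h1 : p (c • h) = (-c) * p (-h) := by
          rw [show c • h = (-c) • (-h) by module]
          exact psmul (-c) (by linarith) (-h)
        have h2 : 0 ≤ p h + p (-h) := by
          have h3 := padd h (-h)
          rw [add_neg_cancel, pzero] at h3
          linarith
        rw [h1]
        nlinarith
      · simp [pzero]
      · rw [psmul c hcpos h]
    by_cases hh : h = 0
    · have hf : ∀ z : (⟨⊥, 0⟩ : X →ₗ.[ℝ] ℝ).domain, (⟨⊥, 0⟩ : X →ₗ.[ℝ] ℝ) z ≤ p z := by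
        rintro ⟨z, hz⟩
        have hz0 : z = 0 := (Submodule.mem_bot ℝ).1 hz
        subst hz0
        simp [pzero]
      obtain ⟨ψl, hext, hle⟩ := exists_extension_of_le_sublinear ⟨⊥, 0⟩ p
        (fun c hc v => psmul c hc v) padd hf
      refine ⟨ψl, hle, ?_⟩
      subst hh
      rw [map_zero, pzero]
    · set fp := LinearPMap.mkSpanSingleton (K := ℝ) (σ := RingHom.id ℝ) h (p h) hh with hfp
      have hf : ∀ z : fp.domain, fp z ≤ p z := by
        rintro ⟨z, hz⟩
        obtain ⟨c, hc⟩ := Submodule.mem_span_singleton.1 hz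
        have hmem : c • h ∈ (Submodule.span ℝ {h} : Submodule ℝ X) :=
          Submodule.smul_mem _ c (Submodule.mem_span_singleton_self h)
        have hz' : (⟨z, hz⟩ : fp.domain) = ⟨c • h, hmem⟩ := Subtype.ext hc.symm
        rw [hz']
        show fp ⟨c • h, hmem⟩ ≤ p (c • h)
        calc fp ⟨c • h, hmem⟩ = c • p h := LinearPMap.mkSpanSingleton'_apply h (p h) _ c hmem
          _ ≤ p (c • h) := by rw [smul_eq_mul]; exact hdomle c
      obtain ⟨ψl, hext, hle⟩ := exists_extension_of_le_sublinear fp p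
        (fun c hc v => psmul c hc v) padd hf
      refine ⟨ψl, hle, ?_⟩
      have := hext ⟨h, Submodule.mem_span_singleton_self h⟩
      rw [LinearPMap.mkSpanSingleton_apply ℝ ℝ hh (p h)] at this
      exact this
  have hψnorm : ∀ v, ‖ψl v‖ ≤ (K : ℝ) * ‖v‖ := by
    intro v
    rw [Real.norm_eq_abs, abs_le]
    constructor
    · have h1 := hψle (-v)
      have h2 := hpub (-v)
      rw [map_neg] at h1
      rw [norm_neg] at h2
      linarith
    · linarith [hψle v, hpub v]
  set ψ : X →L[ℝ] ℝ := LinearMap.mkContinuous ψl (K : ℝ) hψnorm with hψdef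
  have hψap : ∀ v, ψ v = ψl v := fun v => rfl
  -- key pointwise bound on the EReal quotient
  have hA : ∀ (v : X) (t : ℝ), 0 < t →
      ((p v : ℝ) : EReal) ≤ ((t⁻¹ : ℝ) : EReal) * (g₁ (x + t • v) - g₁ x) := by
    intro v t ht
    rcases le_or_gt t (τ v) with htτ | htτ
    · rw [hfg _ (hball v t ht htτ), hgx, ← EReal.coe_sub, ← EReal.coe_mul]
      refine EReal.coe_le_coe_iff.2 ?_
      rw [inv_mul_eq_div]
      exact hple v t ht htτ
    · set s := τ v with hsdef
      have hs : 0 < s := hτpos v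
      by_cases htop : g₁ (x + t • v) = ⊤
      · rw [htop, hgx, EReal.top_sub_coe, EReal.coe_mul_top_of_pos (inv_pos.2 ht)]
        exact le_top
      · obtain ⟨r, hgt⟩ : ∃ r : ℝ, g₁ (x + t • v) = (r : EReal) := by
          lift g₁ (x + t • v) to ℝ using ⟨htop, hbot _⟩ with r hr
          exact ⟨r, rfl⟩
        have ha : 0 < s / t := div_pos hs ht
        have hb : 0 < 1 - s / t := by
          rw [sub_pos]
          exact (div_lt_one ht).2 htτ
        have hcomb : (s / t) • (x + t • v) + (1 - s / t) • x = x + s • v := by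
          have hst' : s / t * t = s := div_mul_cancel₀ s ht.ne'
          rw [smul_add, smul_smul, hst']
          module
        have key := hconv (x + t • v) x (s / t) (1 - s / t) ha hb (by ring)
        rw [hcomb, hgt, hgx, hfg _ (hball v s hs le_rfl)] at key
        have key' : f (x + s • v) ≤ s / t * r + (1 - s / t) * f x := by exact_mod_cast key
        rw [hgt, hgx, ← EReal.coe_sub, ← EReal.coe_mul]
        refine EReal.coe_le_coe_iff.2 ?_
        have h1 : p v ≤ q v s := hple v s hs le_rfl
        have e : (s / t * r + (1 - s / t) * f x) * t = s * r + (t - s) * f x := by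
          field_simp
        have key2 : f (x + s • v) * t ≤ s * r + (t - s) * f x := by
          have := mul_le_mul_of_nonneg_right key' ht.le
          linarith [e]
        have h2 : q v s ≤ t⁻¹ * (r - f x) := by
          show (f (x + s • v) - f x) / s ≤ t⁻¹ * (r - f x)
          rw [inv_mul_eq_div, div_le_div_iff₀ hs ht]
          nlinarith [key2]
        linarith
  -- lower bound on the weak subderivative
  have hlow : ((p h : ℝ) : EReal) ≤ weakFirstSub g₁ x h := by
    refine le_sInf ?_
    rintro L ⟨t, v, htp, ht0, hw, rfl⟩
    have hψlim : Tendsto (fun k => ((ψ (v k) : ℝ) : EReal)) atTop (𝓝 ((ψ h : ℝ) : EReal)) :=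
      EReal.tendsto_coe.2 (hw ψ)
    have hph : ((ψ h : ℝ) : EReal) = ((p h : ℝ) : EReal) := by
      rw [hψap, hψh]
    calc ((p h : ℝ) : EReal) = liminf (fun k => ((ψ (v k) : ℝ) : EReal)) atTop := by
          rw [hψlim.liminf_eq, hph]
      _ ≤ liminf (fun k => (((t k)⁻¹ : ℝ) : EReal) * (g₁ (x + t k • v k) - g₁ x)) atTop := by
          refine liminf_le_liminf (Eventually.of_forall fun k => ?_)
          calc ((ψ (v k) : ℝ) : EReal) ≤ ((p (v k) : ℝ) : EReal) :=
                EReal.coe_le_coe_iff.2 (by rw [hψap]; exact hψle (v k))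
            _ ≤ _ := hA (v k) (t k) (htp k)
  -- upper bound via the constant sequence
  set t₀ : ℕ → ℝ := fun k => τ h / (k + 1) with ht₀def
  have ht₀pos : ∀ k, 0 < t₀ k := fun k => div_pos (hτpos h) (by positivity)
  have ht₀le : ∀ k, t₀ k ≤ τ h := fun k =>
    div_le_self (hτpos h).le (by exact_mod_cast Nat.one_le_iff_ne_zero.2 (Nat.succ_ne_zero k) |>.trans (by push_cast; linarith))
  have ht₀0 : Tendsto t₀ atTop (𝓝 0) :=
    tendsto_const_nhds.div_atTop (tendsto_atTop_add_const_right _ 1 tendsto_natCast_atTop_atTop)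
  have hseq : Tendsto t₀ atTop (𝓝[>] (0:ℝ)) :=
    tendsto_nhdsWithin_iff.2 ⟨ht₀0, Eventually.of_forall ht₀pos⟩
  have hqlim : Tendsto (fun k => ((q h (t₀ k) : ℝ) : EReal)) atTop (𝓝 ((p h : ℝ) : EReal)) :=
    EReal.tendsto_coe.2 ((ptend h).comp hseq)
  have hupp : weakFirstSub g₁ x h ≤ ((p h : ℝ) : EReal) := by
    refine sInf_le ⟨t₀, fun _ => h, ht₀pos, ht₀0, fun φ => tendsto_const_nhds, ?_⟩
    have heq : (fun k => (((t₀ k)⁻¹ : ℝ) : EReal) * (g₁ (x + t₀ k • h) - g₁ x))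
        = fun k => ((q h (t₀ k) : ℝ) : EReal) := by
      funext k
      rw [hfg _ (hball h (t₀ k) (ht₀pos k) (ht₀le k)), hgx, ← EReal.coe_sub, ← EReal.coe_mul,
        inv_mul_eq_div]
    rw [heq, hqlim.liminf_eq]
  refine ⟨p h, le_antisymm hupp hlow, ?_⟩
  -- the strong convergence statement
  intro t htp ht0 v hv
  have hvb : ∀ᶠ k in atTop, ‖v k‖ < ‖h‖ + 1 :=
    (hv.norm).eventually_lt_const (by linarith [norm_nonneg h])
  have htsm : ∀ᶠ k in atTop, t k < δ / (2 * (‖h‖ + 2)) :=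
    ht0.eventually_lt_const (by positivity)
  have htτh : ∀ᶠ k in atTop, t k ≤ τ h := by
    filter_upwards [ht0.eventually_lt_const (hτpos h)] with k hk
    exact hk.le
  have hgood : ∀ᶠ k in atTop, t k ≤ τ (v k) := by
    filter_upwards [hvb, htsm] with k h1 h2
    have h4 : (2:ℝ) * (‖v k‖ + 1) ≤ 2 * (‖h‖ + 2) := by linarith
    have h3 : δ / (2 * (‖h‖ + 2)) ≤ τ (v k) :=
      div_le_div_of_nonneg_left hδ.le (by positivity) h4
    linarith
  have hnorm0 : Tendsto (fun k => ‖v k - h‖) atTop (𝓝 0) := by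
    have := (hv.sub_const h).norm
    simpa using this
  have herr : Tendsto (fun k => (f (x + t k • v k) - f (x + t k • h)) / t k) atTop (𝓝 0) := by
    refine squeeze_zero_norm' (a := fun k => (K : ℝ) * ‖v k - h‖) ?_ ?_
    · filter_upwards [hgood, htτh] with k h1 h2
      have hz₁ : x + t k • v k ∈ Metric.ball x δ := hball (v k) (t k) (htp k) h1
      have hz₂ : x + t k • h ∈ Metric.ball x δ := hball h (t k) (htp k) h2
      have hd := hK.dist_le_mul _ hz₁ _ hz₂
      rw [Real.dist_eq] at hd
      have hdist : dist (x + t k • v k) (x + t k • h) = t k * ‖v k - h‖ := by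
        rw [dist_eq_norm]
        have : x + t k • v k - (x + t k • h) = t k • (v k - h) := by module
        rw [this, norm_smul, Real.norm_eq_abs, abs_of_pos (htp k)]
      rw [hdist] at hd
      rw [Real.norm_eq_abs, abs_div, abs_of_pos (htp k), div_le_iff₀ (htp k)]
      calc |f (x + t k • v k) - f (x + t k • h)| ≤ (K : ℝ) * (t k * ‖v k - h‖) := hd
        _ = (K : ℝ) * ‖v k - h‖ * t k := by ring
    · have := hnorm0.const_mul (K : ℝ)
      simpa using this
  have hmain : Tendsto (fun k => q h (t k)) atTop (𝓝 (p h)) :=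
    (ptend h).comp (tendsto_nhdsWithin_iff.2 ⟨ht0, Eventually.of_forall htp⟩)
  have hsum : Tendsto (fun k => q h (t k) + (f (x + t k • v k) - f (x + t k • h)) / t k)
      atTop (𝓝 (p h)) := by
    have := hmain.add herr
    simpa using this
  refine Tendsto.congr' ?_ (EReal.tendsto_coe.2 hsum)
  filter_upwards [hgood, htτh] with k h1 h2
  have hz₁ : x + t k • v k ∈ Metric.ball x δ := hball (v k) (t k) (htp k) h1
  rw [hfg _ hz₁, hgx, ← EReal.coe_sub, ← EReal.coe_mul]
  refine EReal.coe_eq_coe_iff.2 ?_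
  show (f (x + t k • h) - f x) / t k + (f (x + t k • v k) - f (x + t k • h)) / t k
      = (t k)⁻¹ * (f (x + t k • v k) - f x)
  have hne := (htp k).ne'
  field_simp
  ring

/-- Sum rule for the weak first subderivative. -/
theorem stmt6 {X : Type*} [NormedAddCommGroup X] [NormedSpace ℝ X]
    (g₁ g₂ : X → EReal) (hg₁bot : ∀ z, g₁ z ≠ ⊥) (hg₂bot : ∀ z, g₂ z ≠ ⊥)
    (x : X) (hx₁ : g₁ x ≠ ⊤) (hx₂ : g₂ x ≠ ⊤) :
    (∀ h : X,
      ¬ ((weakFirstSub g₁ x h = ⊤ ∧ weakFirstSub g₂ x h = ⊥) ∨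
         (weakFirstSub g₁ x h = ⊥ ∧ weakFirstSub g₂ x h = ⊤)) →
      weakFirstSub g₁ x h + weakFirstSub g₂ x h ≤
        weakFirstSub (fun z => g₁ z + g₂ z) x h) ∧
    (IsReflexiveSpace X →
      ERealConvex g₁ →
      (∃ δ > (0 : ℝ), ∃ (K : NNReal) (f : X → ℝ),
        (∀ z ∈ Metric.ball x δ, g₁ z = ((f z : ℝ) : EReal)) ∧
        LipschitzOnWith K f (Metric.ball x δ)) →
      StronglyOnceEpiDiff g₂ x →
      ∀ h : X,
        weakFirstSub (fun z => g₁ z + g₂ z) x h =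
          weakFirstSub g₁ x h + weakFirstSub g₂ x h) := by
  have part1 : ∀ h : X, weakFirstSub g₁ x h + weakFirstSub g₂ x h ≤
      weakFirstSub (fun z => g₁ z + g₂ z) x h :=
    sum_rule_ge g₁ g₂ hg₁bot hg₂bot x hx₁ hx₂
  refine ⟨fun h _ => part1 h, ?_⟩
  rintro _ hconv ⟨δ, hδ, K, f, hfg, hK⟩ hepi h
  obtain ⟨p, hp1, hp2⟩ := convex_part hconv hg₁bot hδ hfg hK h
  obtain ⟨c₁, hc₁⟩ : ∃ r : ℝ, g₁ x = (r : EReal) := by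
    lift g₁ x to ℝ using ⟨hx₁, hg₁bot x⟩ with r hr
    exact ⟨r, rfl⟩
  obtain ⟨c₂, hc₂⟩ : ∃ r : ℝ, g₂ x = (r : EReal) := by
    lift g₂ x to ℝ using ⟨hx₂, hg₂bot x⟩ with r hr
    exact ⟨r, rfl⟩
  set t : ℕ → ℝ := fun k => ((k : ℝ) + 1)⁻¹ with htdef
  have htp : ∀ k, 0 < t k := fun k => by positivity
  have ht0 : Tendsto t atTop (𝓝 0) := by
    have := tendsto_one_div_add_atTop_nhds_zero_nat (𝕜 := ℝ)
    simpa [htdef, one_div] using this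
  obtain ⟨v, hv, hlim2⟩ := hepi h t htp ht0
  set d₂ := weakFirstSub g₂ x h with hd₂
  have hlim1 := hp2 t htp ht0 v hv
  have hsplit : (fun k => (((t k)⁻¹ : ℝ) : EReal) *
      ((fun z => g₁ z + g₂ z) (x + t k • v k) - (fun z => g₁ z + g₂ z) x)) =
      fun k => (((t k)⁻¹ : ℝ) : EReal) * (g₁ (x + t k • v k) - g₁ x) +
        (((t k)⁻¹ : ℝ) : EReal) * (g₂ (x + t k • v k) - g₂ x) := by
    funext k
    simp only [hc₁, hc₂]
    exact ereal_quot_split _ (inv_pos.2 (htp k)) _ _ (hg₁bot _) (hg₂bot _) c₁ c₂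
  have hsum : Tendsto (fun k => (((t k)⁻¹ : ℝ) : EReal) * (g₁ (x + t k • v k) - g₁ x) +
      (((t k)⁻¹ : ℝ) : EReal) * (g₂ (x + t k • v k) - g₂ x)) atTop
      (𝓝 (((p : ℝ) : EReal) + d₂)) := by
    have hc : ContinuousAt (fun q : EReal × EReal => q.1 + q.2) (((p : ℝ) : EReal), d₂) :=
      EReal.continuousAt_add (Or.inl (EReal.coe_ne_top p)) (Or.inl (EReal.coe_ne_bot p))
    exact hc.tendsto.comp (hlim1.prodMk_nhds hlim2)
  have hle : weakFirstSub (fun z => g₁ z + g₂ z) x h ≤ ((p : ℝ) : EReal) + d₂ := by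
    refine sInf_le ⟨t, v, htp, ht0, fun φ => ((φ.continuous.tendsto h).comp hv : _), ?_⟩
    rw [hsplit]
    exact hsum.liminf_eq.symm
  rw [hp1]
  refine le_antisymm hle ?_
  have := part1 h
  rw [hp1] at this
  exact this

end
end

section
/- Let X be a reflexive real Banach space and G : X → ℝ ∪ {+∞} convex. For all x ∈ dom G and h ∈ X one has G^↓(x;h) = inf{ liminf_{k→∞} (G(x + t_k h_k) − G(x))/t_k : (t_k) ⊂ (0,∞), t_k → 0, h_k → h in norm }; moreover, there exist sequences t_k ↓ 0 and h_k → h in norm with G^↓(x;h) = lim_{k→∞} (G(x + t_k h_k) − G(x))/t_k, i.e. the infimum is attained; and the function h ↦ G^↓(x;h) is lower semicontinuous on X (with values in [−∞,+∞]). -/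
open Filter Topology

noncomputable section

namespace Stmt7Aux

variable {X : Type*} [NormedAddCommGroup X] [NormedSpace ℝ X]

/-- difference quotient -/
def QQ (G : X → EReal) (x : X) (t : ℝ) (v : X) : EReal :=
  ((t⁻¹ : ℝ) : EReal) * (G (x + t • v) - G x)

/-- strong subderivative along a fixed direction -/
def gg (G : X → EReal) (x : X) (v : X) : EReal :=
  sInf {L : EReal | ∃ t : ℝ, 0 < t ∧ L = QQ G x t v}

/-- the relaxed functional -/
def FF (G : X → EReal) (x : X) (h : X) : EReal :=
  liminf (gg G x) (𝓝 h)

section Basic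

variable {G : X → EReal} {x : X}

lemma QQ_top (hGbot : ∀ z, G z ≠ ⊥) (hx : G x ≠ ⊤) {t : ℝ} (ht : 0 < t) {v : X} (hT : G (x + t • v) = ⊤) :
    QQ G x t v = ⊤ := by
  rw [QQ, hT, ← EReal.coe_toReal hx (hGbot x), EReal.top_sub_coe,
    EReal.coe_mul_top_of_pos (by positivity)]

lemma QQ_coe (hGbot : ∀ z, G z ≠ ⊥) (hx : G x ≠ ⊤) {t : ℝ} (ht : 0 < t) {v : X} (hT : G (x + t • v) ≠ ⊤) :
    QQ G x t v = ((t⁻¹ * ((G (x + t • v)).toReal - (G x).toReal) : ℝ) : EReal) := by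
  rw [QQ, ← EReal.coe_toReal hx (hGbot x), ← EReal.coe_toReal hT (hGbot _),
    ← EReal.coe_sub, ← EReal.coe_mul]
  simp

lemma gg_le {t : ℝ} (ht : 0 < t) (v : X) : gg G x v ≤ QQ G x t v :=
  sInf_le ⟨t, ht, rfl⟩

lemma QQ_mono (hGbot : ∀ z, G z ≠ ⊥) (hx : G x ≠ ⊤) (hGconv : ERealConvex G) {s t : ℝ} (hs : 0 < s) (hst : s ≤ t) (v : X) :
    QQ G x s v ≤ QQ G x t v := by
  have ht : 0 < t := lt_of_lt_of_le hs hst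
  rcases eq_or_ne (G (x + t • v)) ⊤ with hT | hT
  · rw [QQ_top hGbot hx ht hT]; exact le_top
  rcases eq_or_lt_of_le hst with rfl | hlt
  · exact le_rfl
  set gx := (G x).toReal
  set r := (G (x + t • v)).toReal with hrdef
  have hr : (r : EReal) = G (x + t • v) := EReal.coe_toReal hT (hGbot _)
  have hgx : (gx : EReal) = G x := EReal.coe_toReal hx (hGbot x)
  have ha : (0:ℝ) < s / t := by positivity
  have hb : (0:ℝ) < 1 - s / t := by
    have : s / t < 1 := (div_lt_one ht).2 hlt
    linarith
  have hcomb : x + s • v = (s / t) • (x + t • v) + (1 - s / t) • x := by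
    rw [smul_add, smul_smul, div_mul_cancel₀ _ ht.ne', sub_smul, one_smul]
    abel
  have key : G (x + s • v) ≤ (((s / t) * r + (1 - s / t) * gx : ℝ) : EReal) := by
    rw [hcomb]
    calc G ((s / t) • (x + t • v) + (1 - s / t) • x)
        ≤ ((s / t : ℝ) : EReal) * G (x + t • v) + ((1 - s / t : ℝ) : EReal) * G x :=
          hGconv _ _ _ _ ha hb (by ring)
      _ = _ := by rw [← hr, ← hgx, ← EReal.coe_mul, ← EReal.coe_mul, ← EReal.coe_add]
  have hsT : G (x + s • v) ≠ ⊤ := by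
    intro hh; rw [hh] at key
    exact (EReal.coe_lt_top _).not_ge key
  set u := (G (x + s • v)).toReal with hudef
  have hu : (u : EReal) = G (x + s • v) := EReal.coe_toReal hsT (hGbot _)
  have hureal : u ≤ (s / t) * r + (1 - s / t) * gx := by
    rw [← EReal.coe_le_coe_iff]; rw [hu]; exact key
  rw [QQ_coe hGbot hx hs hsT, QQ_coe hGbot hx ht hT]
  rw [EReal.coe_le_coe_iff]
  have h1 : u - gx ≤ (s / t) * (r - gx) := by nlinarith
  have h2 : s⁻¹ * (u - gx) ≤ s⁻¹ * ((s / t) * (r - gx)) :=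
    mul_le_mul_of_nonneg_left h1 (by positivity)
  have h3 : s⁻¹ * ((s / t) * (r - gx)) = t⁻¹ * (r - gx) := by
    field_simp
  calc s⁻¹ * (u - gx) ≤ s⁻¹ * ((s / t) * (r - gx)) := h2
    _ = t⁻¹ * (r - gx) := h3

end Basic

end Stmt7Aux

namespace Stmt7Aux
section Jensen

variable {X : Type*} [NormedAddCommGroup X] [NormedSpace ℝ X]
variable {G : X → EReal}

lemma epi_convex (hGconv : ERealConvex G) :
    Convex ℝ {p : X × ℝ | G p.1 ≤ (p.2 : EReal)} := by
  rintro ⟨z₁, s₁⟩ h₁ ⟨z₂, s₂⟩ h₂ a b ha hb hab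
  rcases eq_or_lt_of_le ha with rfl | ha'
  · have hb1 : b = 1 := by linarith
    subst hb1
    simpa using h₂
  rcases eq_or_lt_of_le hb with rfl | hb'
  · have ha1 : a = 1 := by linarith
    subst ha1
    simpa using h₁
  simp only [Set.mem_setOf_eq] at h₁ h₂ ⊢
  calc G (a • z₁ + b • z₂) ≤ (a : EReal) * G z₁ + (b : EReal) * G z₂ :=
        hGconv _ _ _ _ ha' hb' hab
    _ ≤ (a : EReal) * (s₁ : EReal) + (b : EReal) * (s₂ : EReal) :=
        add_le_add (mul_le_mul_of_nonneg_left h₁ (by exact_mod_cast ha))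
          (mul_le_mul_of_nonneg_left h₂ (by exact_mod_cast hb))
    _ = (((a • z₁ + b • z₂ : X), a * s₁ + b * s₂).2 : EReal) := by
        push_cast
        rfl

lemma jensen_sum (hGconv : ERealConvex G) {ι : Type*} (fs : Finset ι)
    (a : ι → ℝ) (p : ι → X) (r : ι → ℝ)
    (ha0 : ∀ i ∈ fs, 0 ≤ a i) (ha1 : ∑ i ∈ fs, a i = 1)
    (hpr : ∀ i ∈ fs, G (p i) ≤ (r i : EReal)) :
    G (∑ i ∈ fs, a i • p i) ≤ ((∑ i ∈ fs, a i * r i : ℝ) : EReal) := by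
  have hmem : ∀ i ∈ fs, ((p i, r i) : X × ℝ) ∈ {q : X × ℝ | G q.1 ≤ (q.2 : EReal)} :=
    fun i hi => hpr i hi
  have := (epi_convex hGconv).sum_mem ha0 ha1 hmem
  simp only [Set.mem_setOf_eq, Prod.fst_sum, Prod.snd_sum, Prod.smul_mk, smul_eq_mul] at this
  exact this

end Jensen

section Mazur

variable {X : Type*} [NormedAddCommGroup X] [NormedSpace ℝ X]

lemma mazur {v : ℕ → X} {h : X} (hw : WeakConv v h) {S : Set ℕ}
    (hS : ∃ᶠ k in atTop, k ∈ S) :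
    h ∈ closure (convexHull ℝ (v '' S)) := by
  by_contra hc
  obtain ⟨ψ, u, hu1, hu2⟩ :=
    geometric_hahn_banach_point_closed ((convex_convexHull ℝ _).closure) isClosed_closure hc
  have hev : ∀ᶠ k in atTop, ψ (v k) < u := (hw ψ).eventually_lt_const hu1
  obtain ⟨k, hkS, hklt⟩ := (hS.and_eventually hev).exists
  have : u < ψ (v k) :=
    hu2 _ (subset_closure (subset_convexHull ℝ _ ⟨k, hkS, rfl⟩))
  linarith

end Mazur
end Stmt7Aux

namespace Stmt7Aux

variable {X : Type*} [NormedAddCommGroup X] [NormedSpace ℝ X]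

/-- infimum of `gg` over small balls -/
def cc (G : X → EReal) (x : X) (h : X) (n : ℕ) : EReal :=
  sInf (gg G x '' Metric.ball h (1 / ((n : ℝ) + 1)))

variable {G : X → EReal} {x : X}

lemma cc_mono (h : X) : Monotone (cc G x h) := by
  intro n m hnm
  apply sInf_le_sInf
  apply Set.image_mono
  apply Metric.ball_subset_ball
  apply one_div_le_one_div_of_le (by positivity)
  have : (n : ℝ) ≤ (m : ℝ) := by exact_mod_cast hnm
  linarith

lemma cc_le_FF (h : X) (n : ℕ) : cc G x h n ≤ FF G x h := by
  refine le_liminf_of_le (by isBoundedDefault) ?_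
  filter_upwards [Metric.ball_mem_nhds h (by positivity : (0:ℝ) < 1 / ((n : ℝ) + 1))] with w hw
  exact sInf_le ⟨w, hw, rfl⟩

lemma FF_eq_iSup_cc (h : X) : (⨆ n, cc G x h n) = FF G x h := by
  refine le_antisymm (iSup_le fun n => cc_le_FF h n) ?_
  rw [FF, liminf_eq]
  apply sSup_le
  rintro a ha
  obtain ⟨ε, hε, hball⟩ := Metric.eventually_nhds_iff_ball.mp ha
  obtain ⟨n, hn⟩ := exists_nat_one_div_lt hε
  refine le_trans ?_ (le_iSup _ n)
  apply le_sInf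
  rintro e ⟨w, hw, rfl⟩
  exact hball w (Metric.ball_subset_ball hn.le hw)

lemma cc_tendsto (h : X) : Tendsto (cc G x h) atTop (𝓝 (FF G x h)) := by
  rw [← FF_eq_iSup_cc h]
  exact tendsto_atTop_iSup (cc_mono h)

lemma attain (hGbot : ∀ z, G z ≠ ⊥) (hx : G x ≠ ⊤) (hGconv : ERealConvex G) (h : X) :
    ∃ (t : ℕ → ℝ) (v : ℕ → X),
      (∀ k, 0 < t k) ∧ Tendsto t atTop (𝓝 0) ∧ Tendsto v atTop (𝓝 h) ∧
      Tendsto (fun k => QQ G x (t k) (v k)) atTop (𝓝 (FF G x h)) := by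
  obtain ⟨B, hBtend, hBprop⟩ : ∃ B : ℕ → EReal,
      Tendsto B atTop (𝓝 (FF G x h)) ∧ ∀ n, B n ≠ ⊤ → cc G x h n < B n := by
    rcases eq_or_ne (FF G x h) ⊤ with hF | hF
    · exact ⟨fun _ => ⊤, by rw [hF]; exact tendsto_const_nhds, fun n hn => absurd rfl hn⟩
    rcases eq_or_ne (FF G x h) ⊥ with hF' | hF'
    · refine ⟨fun n => ((-(n : ℝ) : ℝ) : EReal), ?_, fun n _ => ?_⟩
      · rw [hF']
        rw [EReal.tendsto_nhds_bot_iff_real]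
        intro c
        filter_upwards [eventually_gt_atTop ⌈-c⌉₊] with n hn
        rw [EReal.coe_lt_coe_iff]
        have : (-c : ℝ) < n := lt_of_le_of_lt (Nat.le_ceil _) (by exact_mod_cast hn)
        linarith
      · have h1 : cc G x h n ≤ ⊥ := hF' ▸ cc_le_FF h n
        rw [le_bot_iff.mp h1]
        exact EReal.bot_lt_coe _
    · set c := (FF G x h).toReal with hcdef
      have hcoe : ((c : ℝ) : EReal) = FF G x h := EReal.coe_toReal hF hF'
      refine ⟨fun n => ((c + 1 / ((n : ℝ) + 1) : ℝ) : EReal), ?_, fun n _ => ?_⟩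
      · rw [← hcoe]
        rw [EReal.tendsto_coe]
        have := tendsto_one_div_add_atTop_nhds_zero_nat (𝕜 := ℝ)
        simpa using tendsto_const_nhds.add this
      · refine lt_of_le_of_lt (le_trans (cc_le_FF h n) hcoe.symm.le) ?_
        rw [EReal.coe_lt_coe_iff]
        have : (0:ℝ) < 1 / ((n : ℝ) + 1) := by positivity
        linarith
  have hwit : ∀ n : ℕ, ∃ (tn : ℝ) (vn : X), 0 < tn ∧ tn ≤ 1 / ((n : ℝ) + 1) ∧
      dist vn h < 1 / ((n : ℝ) + 1) ∧ QQ G x tn vn ≤ B n := by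
    intro n
    rcases eq_or_ne (B n) ⊤ with hBn | hBn
    · refine ⟨1 / ((n : ℝ) + 1), h, by positivity, le_rfl, ?_, by rw [hBn]; exact le_top⟩
      simpa using (by positivity : (0:ℝ) < 1 / ((n : ℝ) + 1))
    · have h1 : cc G x h n < B n := hBprop n hBn
      obtain ⟨e, ⟨w, hw, rfl⟩, hlt⟩ := sInf_lt_iff.mp h1
      obtain ⟨L, ⟨t0, ht0, rfl⟩, hlt2⟩ := sInf_lt_iff.mp hlt
      have htm : 0 < min t0 (1 / ((n : ℝ) + 1)) := lt_min ht0 (by positivity)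
      refine ⟨min t0 (1 / ((n : ℝ) + 1)), w, htm, min_le_right _ _, ?_, ?_⟩
      · exact Metric.mem_ball.mp hw
      · exact le_of_lt (lt_of_le_of_lt
          (QQ_mono hGbot hx hGconv htm (min_le_left _ _) w) hlt2)
  choose tf vf htpos htle hvdist hQle using hwit
  have haux : Tendsto (fun n : ℕ => 1 / ((n : ℝ) + 1)) atTop (𝓝 0) := by
    simpa using tendsto_one_div_add_atTop_nhds_zero_nat (𝕜 := ℝ)
  refine ⟨tf, vf, htpos, ?_, ?_, ?_⟩
  · exact tendsto_of_tendsto_of_tendsto_of_le_of_le tendsto_const_nhds haux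
      (fun n => (htpos n).le) htle
  · rw [tendsto_iff_dist_tendsto_zero]
    exact tendsto_of_tendsto_of_tendsto_of_le_of_le tendsto_const_nhds haux
      (fun n => dist_nonneg) (fun n => (hvdist n).le)
  · refine tendsto_of_tendsto_of_tendsto_of_le_of_le (cc_tendsto h) hBtend ?_ hQle
    intro n
    exact le_trans (sInf_le ⟨vf n, Metric.mem_ball.mpr (hvdist n), rfl⟩)
      (gg_le (htpos n) (vf n))

lemma strong_lb (hGbot : ∀ z, G z ≠ ⊥) (hx : G x ≠ ⊤) {h : X} {t : ℕ → ℝ} {v : ℕ → X}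
    (htpos : ∀ k, 0 < t k) (hv : Tendsto v atTop (𝓝 h)) :
    FF G x h ≤ liminf (fun k => QQ G x (t k) (v k)) atTop := by
  have h1 : FF G x h ≤ liminf (fun k => gg G x (v k)) atTop := by
    have h2 : liminf (gg G x) (𝓝 h) ≤ liminf (gg G x) (Filter.map v atTop) :=
      liminf_le_liminf_of_le hv
    have h3 : liminf (gg G x) (Filter.map v atTop) = liminf (fun k => gg G x (v k)) atTop := by
      rw [Filter.liminf, Filter.liminf, Filter.map_map]
      rfl
    rw [FF]
    exact h2.trans h3.le
  exact h1.trans (liminf_le_liminf (Eventually.of_forall fun k => gg_le (htpos k) (v k)))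

end Stmt7Aux

namespace Stmt7Aux

variable {X : Type*} [NormedAddCommGroup X] [NormedSpace ℝ X]
variable {G : X → EReal} {x : X}

lemma weak_lb (hGbot : ∀ z, G z ≠ ⊥) (hx : G x ≠ ⊤) (hGconv : ERealConvex G)
    {h : X} {t : ℕ → ℝ} {v : ℕ → X}
    (htpos : ∀ k, 0 < t k) (hwv : WeakConv v h) :
    FF G x h ≤ liminf (fun k => QQ G x (t k) (v k)) atTop := by
  set L := liminf (fun k => QQ G x (t k) (v k)) atTop with hL
  suffices H : ∀ c : ℝ, L < (c : EReal) → FF G x h ≤ (c : EReal) by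
    by_contra hcon
    push_neg at hcon
    obtain ⟨c, h1, h2⟩ := EReal.exists_between_coe_real hcon
    exact absurd (H c h1) (not_le.2 h2)
  intro c hLc
  have hfreq : ∃ᶠ k in atTop, QQ G x (t k) (v k) < (c : EReal) :=
    frequently_lt_of_liminf_lt (by isBoundedDefault) hLc
  set S : Set ℕ := {k | QQ G x (t k) (v k) < (c : EReal)} with hSdef
  have hh : h ∈ closure (convexHull ℝ (v '' S)) := mazur hwv hfreq
  rw [FF]
  apply liminf_le_of_frequently_le'
  rw [Filter.frequently_iff]
  intro U hU
  obtain ⟨ε, hε, hball⟩ := Metric.mem_nhds_iff.mp hU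
  obtain ⟨w, hwmem, hwdist⟩ := Metric.mem_closure_iff.mp hh ε hε
  refine ⟨w, hball (Metric.mem_ball.2 (by rwa [dist_comm] at hwdist)), ?_⟩
  -- show gg w ≤ c
  rw [convexHull_eq] at hwmem
  obtain ⟨ι, fs, a, z, ha0, ha1, hz, hcm⟩ := hwmem
  have hfs : fs.Nonempty := Finset.nonempty_iff_ne_empty.2 (by
    intro he; rw [he] at ha1; simp at ha1)
  have hchoose : ∀ i ∈ fs, ∃ m, m ∈ S ∧ v m = z i := by
    intro i hi
    obtain ⟨m, hm, hvm⟩ := hz i hi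
    exact ⟨m, hm, hvm⟩
  choose! k hk1 hk2 using hchoose
  set τ := fs.inf' hfs (fun i => t (k i)) with hτdef
  have hτpos : 0 < τ := (Finset.lt_inf'_iff hfs).2 fun i _ => htpos _
  have hτle : ∀ i ∈ fs, τ ≤ t (k i) := fun i hi => Finset.inf'_le _ hi
  have hQi : ∀ i ∈ fs, QQ G x τ (v (k i)) < (c : EReal) := fun i hi =>
    lt_of_le_of_lt (QQ_mono hGbot hx hGconv hτpos (hτle i hi) _) (hk1 i hi)
  have hTi : ∀ i ∈ fs, G (x + τ • v (k i)) ≠ ⊤ := by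
    intro i hi hT
    have := hQi i hi
    rw [QQ_top hGbot hx hτpos hT] at this
    exact not_top_lt this
  set gx := (G x).toReal with hgxdef
  set r : ι → ℝ := fun i => (G (x + τ • v (k i))).toReal with hrdef
  have hri : ∀ i ∈ fs, τ⁻¹ * (r i - gx) < c := by
    intro i hi
    have h5 := hQi i hi
    rw [QQ_coe hGbot hx hτpos (hTi i hi)] at h5
    exact_mod_cast h5
  have hw_eq : w = ∑ i ∈ fs, a i • z i := by
    rw [← hcm, Finset.centerMass_eq_of_sum_1 _ _ ha1]
  have hz_eq : ∀ i ∈ fs, z i = v (k i) := fun i hi => (hk2 i hi).symm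
  have hsum : ∑ i ∈ fs, a i • (x + τ • v (k i)) = x + τ • w := by
    calc ∑ i ∈ fs, a i • (x + τ • v (k i))
        = ∑ i ∈ fs, (a i • x + a i • (τ • v (k i))) := by simp [smul_add]
      _ = (∑ i ∈ fs, a i) • x + ∑ i ∈ fs, τ • (a i • v (k i)) := by
          rw [Finset.sum_add_distrib, Finset.sum_smul]
          congr 1
          refine Finset.sum_congr rfl fun i _ => ?_
          rw [smul_comm]
      _ = x + τ • ∑ i ∈ fs, a i • v (k i) := by
          rw [ha1, one_smul, ← Finset.smul_sum]
      _ = x + τ • w := by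
          rw [hw_eq]
          congr 1
          exact congrArg _ (Finset.sum_congr rfl fun i hi => by rw [hz_eq i hi]).symm
  have hG : G (x + τ • w) ≤ ((∑ i ∈ fs, a i * r i : ℝ) : EReal) := by
    rw [← hsum]
    exact jensen_sum hGconv fs a _ r ha0 ha1
      (fun i hi => le_of_eq (EReal.coe_toReal (hTi i hi) (hGbot _)).symm)
  have hne : G (x + τ • w) ≠ ⊤ := by
    intro hT
    rw [hT] at hG
    exact (EReal.coe_lt_top _).not_ge hG
  have hQw : QQ G x τ w ≤ (c : EReal) := by
    rw [QQ_coe hGbot hx hτpos hne, EReal.coe_le_coe_iff]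
    have htR : (G (x + τ • w)).toReal ≤ ∑ i ∈ fs, a i * r i := by
      rw [← EReal.coe_le_coe_iff, EReal.coe_toReal hne (hGbot _)]
      exact hG
    have step1 : τ⁻¹ * ((G (x + τ • w)).toReal - gx) ≤ τ⁻¹ * ((∑ i ∈ fs, a i * r i) - gx) :=
      mul_le_mul_of_nonneg_left (by linarith) (by positivity)
    have e1 : ∑ i ∈ fs, a i * (τ⁻¹ * (r i - gx)) = τ⁻¹ * ∑ i ∈ fs, (a i * r i - a i * gx) := by
      rw [Finset.mul_sum]
      exact Finset.sum_congr rfl fun i _ => by ring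
    have e2 : ∑ i ∈ fs, (a i * r i - a i * gx) = (∑ i ∈ fs, a i * r i) - gx := by
      rw [Finset.sum_sub_distrib, ← Finset.sum_mul, ha1, one_mul]
    have step3 : ∑ i ∈ fs, a i * (τ⁻¹ * (r i - gx)) ≤ ∑ i ∈ fs, a i * c :=
      Finset.sum_le_sum fun i hi => mul_le_mul_of_nonneg_left (hri i hi).le (ha0 i hi)
    have step4 : ∑ i ∈ fs, a i * c = c := by
      rw [← Finset.sum_mul, ha1, one_mul]
    rw [e1, e2] at step3
    linarith
  exact le_trans (gg_le hτpos w) hQw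

end Stmt7Aux

namespace Stmt7Aux

variable {X : Type*} [NormedAddCommGroup X] [NormedSpace ℝ X]
variable {G : X → EReal} {x : X}

lemma FF_lsc : LowerSemicontinuous (FF G x) := by
  intro h b hb
  obtain ⟨a, hba, haF⟩ := exists_between hb
  have hev : ∀ᶠ z in 𝓝 h, a < gg G x z := eventually_lt_of_lt_liminf haF
  obtain ⟨U, hUsub, hUopen, hhU⟩ := eventually_nhds_iff.mp hev
  filter_upwards [hUopen.mem_nhds hhU] with y hy
  refine lt_of_lt_of_le hba (le_liminf_of_le (by isBoundedDefault) ?_)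
  filter_upwards [hUopen.mem_nhds hy] with z hz
  exact (hUsub z hz).le

end Stmt7Aux


open Stmt7Aux

/-- On a reflexive space, for convex `G` the weak first subderivative coincides with the
strong one, the infimum is attained, and `G^↓(x; ·)` is lower semicontinuous. -/
theorem stmt7 {X : Type*} [NormedAddCommGroup X] [NormedSpace ℝ X]
    (hrefl : IsReflexiveSpace X)
    (G : X → EReal) (hGbot : ∀ z, G z ≠ ⊥) (hGconv : ERealConvex G)
    (x : X) (hx : G x ≠ ⊤) :
    (∀ h : X, weakFirstSub G x h =
      sInf { L : EReal | ∃ (t : ℕ → ℝ) (v : ℕ → X),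
        (∀ k, 0 < t k) ∧ Tendsto t atTop (𝓝 0) ∧ Tendsto v atTop (𝓝 h) ∧
        L = liminf (fun k => (((t k)⁻¹ : ℝ) : EReal) * (G (x + t k • v k) - G x)) atTop }) ∧
    (∀ h : X, ∃ (t : ℕ → ℝ) (v : ℕ → X),
      (∀ k, 0 < t k) ∧ Tendsto t atTop (𝓝 0) ∧ Tendsto v atTop (𝓝 h) ∧
      Tendsto (fun k => (((t k)⁻¹ : ℝ) : EReal) * (G (x + t k • v k) - G x)) atTop
        (𝓝 (weakFirstSub G x h))) ∧
    LowerSemicontinuous (fun h => weakFirstSub G x h) := by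
  have hFweak : ∀ h : X, weakFirstSub G x h = FF G x h := by
    intro h
    apply le_antisymm
    · obtain ⟨t, v, htpos, htt, hvt, hQt⟩ := attain hGbot hx hGconv h
      apply sInf_le
      exact ⟨t, v, htpos, htt, fun ψ => (ψ.continuous.tendsto h).comp hvt,
        hQt.liminf_eq.symm⟩
    · apply le_sInf
      rintro L ⟨t, v, htpos, htt, hwv, rfl⟩
      exact weak_lb hGbot hx hGconv htpos hwv
  have hFstrong : ∀ h : X,
      sInf { L : EReal | ∃ (t : ℕ → ℝ) (v : ℕ → X),
        (∀ k, 0 < t k) ∧ Tendsto t atTop (𝓝 0) ∧ Tendsto v atTop (𝓝 h) ∧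
        L = liminf (fun k => (((t k)⁻¹ : ℝ) : EReal) * (G (x + t k • v k) - G x)) atTop }
      = FF G x h := by
    intro h
    apply le_antisymm
    · obtain ⟨t, v, htpos, htt, hvt, hQt⟩ := attain hGbot hx hGconv h
      exact sInf_le ⟨t, v, htpos, htt, hvt, hQt.liminf_eq.symm⟩
    · apply le_sInf
      rintro L ⟨t, v, htpos, htt, hvt, rfl⟩
      exact strong_lb hGbot hx htpos hvt
  refine ⟨fun h => (hFweak h).trans (hFstrong h).symm, ?_, ?_⟩
  · intro h
    obtain ⟨t, v, htpos, htt, hvt, hQt⟩ := attain hGbot hx hGconv h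
    refine ⟨t, v, htpos, htt, hvt, ?_⟩
    rw [hFweak h]
    exact hQt
  · have heq : (fun h => weakFirstSub G x h) = FF G x := funext hFweak
    rw [heq]
    exact FF_lsc

end
end

section
/- Let X be a reflexive real Banach space, G : X → ℝ ∪ {+∞} convex, and x ∈ dom G. Then the following are equivalent: (i) G^↓(x;0) = 0; (ii) ∂G(x) ≠ ∅. If these hold, then moreover G^↓(x;h) = sup{ ⟨w,h⟩ : w ∈ ∂G(x) } for all h ∈ X. -/
open Filter Topology

noncomputable section

/-- The subdifferential of `G` at `x`, as a subset of the topological dual. -/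
def subdiff {X : Type*} [NormedAddCommGroup X] [NormedSpace ℝ X]
    (G : X → EReal) (x : X) : Set (X →L[ℝ] ℝ) :=
  { w : X →L[ℝ] ℝ | ∀ z : X, G x + ((w (z - x) : ℝ) : EReal) ≤ G z }

namespace Stmt8Aux

variable {X : Type*} [NormedAddCommGroup X] [NormedSpace ℝ X]

/-- Strict epigraph of the directional difference quotients of `G` at `x`. -/
def Cset (G : X → EReal) (x : X) (gx : ℝ) : Set (X × ℝ) :=
  {p : X × ℝ | ∃ t : ℝ, 0 < t ∧ G (x + t • p.1) < ((gx + t * p.2 : ℝ) : EReal)}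

lemma real_of_lt_coe {G : X → EReal} (hGbot : ∀ z, G z ≠ ⊥) {z : X} {c : ℝ}
    (h : G z < (c : EReal)) : ∃ g : ℝ, G z = (g : EReal) ∧ g < c := by
  refine ⟨(G z).toReal, (EReal.coe_toReal h.ne_top (hGbot z)).symm, ?_⟩
  rw [← EReal.coe_toReal h.ne_top (hGbot z)] at h
  exact_mod_cast h

/-- Membership in `Cset` persists for smaller `t`. -/
lemma shrink {G : X → EReal} {x : X} {gx : ℝ} (hGbot : ∀ z, G z ≠ ⊥)
    (hGconv : ERealConvex G) (hgx : G x = (gx : EReal))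
    {h : X} {r t t' : ℝ} (ht' : 0 < t') (htt' : t' ≤ t)
    (hC : G (x + t • h) < ((gx + t * r : ℝ) : EReal)) :
    G (x + t' • h) < ((gx + t' * r : ℝ) : EReal) := by
  rcases eq_or_lt_of_le htt' with rfl | hlt
  · exact hC
  · have ht : 0 < t := ht'.trans hlt
    obtain ⟨g1, hg1, hg1lt⟩ := real_of_lt_coe hGbot hC
    set a := t' / t with ha_def
    have ha : 0 < a := div_pos ht' ht
    have ha1 : a < 1 := (div_lt_one ht).2 hlt
    have hb : 0 < 1 - a := by linarith
    have hat : a * t = t' := by rw [ha_def, div_mul_cancel₀ _ ht.ne']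
    have hpt : a • (x + t • h) + (1 - a) • x = x + t' • h := by rw [← hat]; module
    have hcv := hGconv (x + t • h) x a (1 - a) ha hb (by ring)
    rw [hpt, hg1, hgx, ← EReal.coe_mul, ← EReal.coe_mul, ← EReal.coe_add] at hcv
    refine lt_of_le_of_lt hcv ?_
    have e1 := mul_lt_mul_of_pos_left hg1lt ha
    have e2 : a * (gx + t * r) = a * gx + t' * r := by rw [← hat]; ring
    have : a * g1 + (1 - a) * gx < gx + t' * r := by nlinarith [e1, e2]
    exact_mod_cast this

lemma convex_Cset {G : X → EReal} {x : X} {gx : ℝ} (hGbot : ∀ z, G z ≠ ⊥)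
    (hGconv : ERealConvex G) (hgx : G x = (gx : EReal)) :
    Convex ℝ (Cset G x gx) := by
  intro p hp q hq a b ha hb hab
  rcases ha.eq_or_lt with rfl | ha'
  · simpa [(by linarith : b = 1)] using hq
  rcases hb.eq_or_lt with rfl | hb'
  · simpa [(by linarith : a = 1)] using hp
  obtain ⟨t1, ht1, hC1⟩ := hp
  obtain ⟨t2, ht2, hC2⟩ := hq
  set t := min t1 t2 with ht_def
  have ht : 0 < t := lt_min ht1 ht2
  have hC1' := shrink hGbot hGconv hgx ht (min_le_left t1 t2) hC1
  have hC2' := shrink hGbot hGconv hgx ht (min_le_right t1 t2) hC2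
  obtain ⟨g1, hg1, hg1lt⟩ := real_of_lt_coe hGbot hC1'
  obtain ⟨g2, hg2, hg2lt⟩ := real_of_lt_coe hGbot hC2'
  refine ⟨t, ht, ?_⟩
  have hpt : a • (x + t • p.1) + b • (x + t • q.1)
      = (a + b) • x + t • (a • p.1 + b • q.1) := by module
  rw [hab, one_smul] at hpt
  have hfst : (a • p + b • q).1 = a • p.1 + b • q.1 := rfl
  have hpt' : x + t • (a • p + b • q).1 = a • (x + t • p.1) + b • (x + t • q.1) := by
    rw [hfst, ← hpt]
  have hcv := hGconv (x + t • p.1) (x + t • q.1) a b ha' hb' hab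
  rw [← hpt', hg1, hg2, ← EReal.coe_mul, ← EReal.coe_mul, ← EReal.coe_add] at hcv
  refine lt_of_le_of_lt hcv ?_
  have hsnd : (a • p + b • q).2 = a * p.2 + b * q.2 := rfl
  rw [hsnd]
  have e1 := mul_lt_mul_of_pos_left hg1lt ha'
  have e2 := mul_lt_mul_of_pos_left hg2lt hb'
  have e3 : a * (gx + t * p.2) + b * (gx + t * q.2)
      = (a + b) * gx + t * (a * p.2 + b * q.2) := by ring
  rw [hab, one_mul] at e3
  have : a * g1 + b * g2 < gx + t * (a * p.2 + b * q.2) := by linarith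
  exact_mod_cast this

lemma scale_Cset {G : X → EReal} {x : X} {gx : ℝ} {p : X × ℝ}
    (hp : p ∈ Cset G x gx) {l : ℝ} (hl : 0 < l) : l • p ∈ Cset G x gx := by
  obtain ⟨t, ht, hC⟩ := hp
  refine ⟨t / l, div_pos ht hl, ?_⟩
  have h1 : (t / l) • (l • p).1 = t • p.1 := by
    show (t / l) • (l • p.1) = t • p.1
    rw [smul_smul, div_mul_cancel₀ _ hl.ne']
  have h2 : (t / l) * (l • p).2 = t * p.2 := by
    show (t / l) * (l * p.2) = t * p.2
    field_simp
  rw [h1, h2]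
  exact hC

lemma zero_mem_Cset {G : X → EReal} {x : X} {gx : ℝ} (hgx : G x = (gx : EReal))
    {r : ℝ} (hr : 0 < r) : ((0 : X), r) ∈ Cset G x gx := by
  refine ⟨1, one_pos, ?_⟩
  rw [smul_zero, add_zero, hgx]
  exact_mod_cast (by linarith : gx < gx + 1 * r)

/-- A subgradient lies below every point of `Cset`. -/
lemma subdiff_le_Cset {G : X → EReal} {x : X} {gx : ℝ} (hgx : G x = (gx : EReal))
    {w : X →L[ℝ] ℝ} (hw : w ∈ subdiff G x) {p : X × ℝ} (hp : p ∈ Cset G x gx) :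
    w p.1 ≤ p.2 := by
  obtain ⟨t, ht, hC⟩ := hp
  have h1 := hw (x + t • p.1)
  rw [show x + t • p.1 - x = t • p.1 by abel, hgx, map_smul, smul_eq_mul] at h1
  have h2 := lt_of_le_of_lt h1 hC
  rw [← EReal.coe_add] at h2
  have h3 : gx + t * w p.1 < gx + t * p.2 := by exact_mod_cast h2
  nlinarith

/-- Conversely, a functional below `Cset` is a subgradient. -/
lemma mem_subdiff_of_le_Cset {G : X → EReal} {x : X} {gx : ℝ}
    (hGbot : ∀ z, G z ≠ ⊥) (hgx : G x = (gx : EReal))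
    {w : X →L[ℝ] ℝ} (hw : ∀ p ∈ Cset G x gx, w p.1 ≤ p.2) : w ∈ subdiff G x := by
  intro z
  by_contra hcon
  push_neg at hcon
  rw [hgx, ← EReal.coe_add] at hcon
  obtain ⟨g, hg, hglt⟩ := real_of_lt_coe hGbot hcon
  set r := (g - gx + w (z - x)) / 2 with hr_def
  have hmem : (z - x, r) ∈ Cset G x gx := by
    refine ⟨1, one_pos, ?_⟩
    rw [show x + (1 : ℝ) • (z - x) = z by module, hg]
    exact_mod_cast (by rw [hr_def]; linarith : g < gx + 1 * r)
  have := hw _ hmem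
  simp only at this
  rw [hr_def] at this
  linarith

/-- Lower bound for the weak first subderivative from a subgradient. -/
lemma wfs_ge {G : X → EReal} {x : X} {gx : ℝ} (hGbot : ∀ z, G z ≠ ⊥)
    (hgx : G x = (gx : EReal)) {w : X →L[ℝ] ℝ} (hw : w ∈ subdiff G x) (h : X) :
    ((w h : ℝ) : EReal) ≤ weakFirstSub G x h := by
  rw [weakFirstSub]
  refine le_sInf ?_
  rintro L ⟨t, v, hpos, htend, hwc, rfl⟩
  have key : ∀ k, ((w (v k) : ℝ) : EReal) ≤
      (((t k)⁻¹ : ℝ) : EReal) * (G (x + t k • v k) - G x) := by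
    intro k
    have h1 := hw (x + t k • v k)
    rw [show x + t k • v k - x = t k • v k by abel, hgx, map_smul, smul_eq_mul] at h1
    rcases eq_or_ne (G (x + t k • v k)) ⊤ with htop | hne
    · rw [hgx, htop, EReal.top_sub_coe,
        EReal.coe_mul_top_of_pos (inv_pos.2 (hpos k))]
      exact le_top
    · obtain ⟨g, hg⟩ : ∃ g : ℝ, G (x + t k • v k) = (g : EReal) :=
        ⟨_, (EReal.coe_toReal hne (hGbot _)).symm⟩
      rw [hg, ← EReal.coe_add] at h1
      have h2 : gx + t k * w (v k) ≤ g := by exact_mod_cast h1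
      rw [hg, hgx, ← EReal.coe_sub, ← EReal.coe_mul, EReal.coe_le_coe_iff]
      have htk := hpos k
      rw [inv_mul_eq_div, le_div_iff₀ htk]
      nlinarith [h2]
  calc ((w h : ℝ) : EReal) = liminf (fun k => ((w (v k) : ℝ) : EReal)) atTop := by
        refine (Tendsto.liminf_eq ?_).symm
        exact (continuous_coe_real_ereal.tendsto _).comp (hwc w)
    _ ≤ _ := liminf_le_liminf (Eventually.of_forall key)

/-- Upper bound: points in the closure of `Cset` bound the weak first subderivative. -/
lemma wfs_le_of_closure {G : X → EReal} {x : X} {gx : ℝ} (hGbot : ∀ z, G z ≠ ⊥)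
    (hGconv : ERealConvex G) (hgx : G x = (gx : EReal)) {h : X} {c : ℝ}
    (hc : (h, c) ∈ closure (Cset G x gx)) : weakFirstSub G x h ≤ (c : EReal) := by
  obtain ⟨p, hpC, hplim⟩ := mem_closure_iff_seq_limit.1 hc
  have h1 : Tendsto (fun j => (p j).1) atTop (𝓝 h) := (continuous_fst.tendsto _).comp hplim
  have h2 : Tendsto (fun j => (p j).2) atTop (𝓝 c) := (continuous_snd.tendsto _).comp hplim
  choose t' ht'pos ht'C using hpC
  set t : ℕ → ℝ := fun j => min (t' j) (1 / (j + 1)) with ht_def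
  have htpos : ∀ j, 0 < t j := fun j => lt_min (ht'pos j) (by positivity)
  have httend : Tendsto t atTop (𝓝 0) := by
    refine tendsto_of_tendsto_of_tendsto_of_le_of_le tendsto_const_nhds
      tendsto_one_div_add_atTop_nhds_zero_nat (fun j => (htpos j).le)
      (fun j => min_le_right _ _)
  have hQ : ∀ j, G (x + t j • (p j).1) < ((gx + t j * (p j).2 : ℝ) : EReal) :=
    fun j => shrink hGbot hGconv hgx (htpos j) (min_le_left _ _) (ht'C j)
  have hwc : WeakConv (fun j => (p j).1) h := fun ψ => (ψ.continuous.tendsto h).comp h1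
  set L := liminf (fun j => (((t j)⁻¹ : ℝ) : EReal) * (G (x + t j • (p j).1) - G x)) atTop
    with hL_def
  have hmem : weakFirstSub G x h ≤ L := by
    rw [weakFirstSub]
    exact sInf_le ⟨t, fun j => (p j).1, htpos, httend, hwc, rfl⟩
  refine hmem.trans ?_
  have key : ∀ j, (((t j)⁻¹ : ℝ) : EReal) * (G (x + t j • (p j).1) - G x) ≤
      (((p j).2 : ℝ) : EReal) := by
    intro j
    obtain ⟨g, hg, hglt⟩ := real_of_lt_coe hGbot (hQ j)
    rw [hg, hgx, ← EReal.coe_sub, ← EReal.coe_mul, EReal.coe_le_coe_iff]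
    have htj := htpos j
    rw [← sub_nonneg]
    have : (p j).2 - (t j)⁻¹ * (g - gx) = (t j)⁻¹ * ((gx + t j * (p j).2) - g) := by
      field_simp; ring
    rw [this]
    have : 0 ≤ (gx + t j * (p j).2) - g := by linarith
    positivity
  calc L ≤ liminf (fun j => (((p j).2 : ℝ) : EReal)) atTop :=
        liminf_le_liminf (Eventually.of_forall key)
    _ = (c : EReal) := Tendsto.liminf_eq ((continuous_coe_real_ereal.tendsto _).comp h2)

/-- Separation from the closure of `Cset`. -/
lemma sep {G : X → EReal} {x : X} {gx : ℝ} (hgx : G x = (gx : EReal))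
    (hconv : Convex ℝ (Cset G x gx)) {q : X × ℝ} (hq : q ∉ closure (Cset G x gx)) :
    ∃ f : (X × ℝ) →L[ℝ] ℝ, (∀ p ∈ Cset G x gx, f p ≤ 0) ∧ 0 < f q := by
  obtain ⟨f, u, hfu, huq⟩ :=
    geometric_hahn_banach_closed_point hconv.closure isClosed_closure hq
  have hu0 : 0 ≤ u := by
    have hlim : Tendsto (fun n : ℕ => f ((0 : X), 1 / (n + 1))) atTop (𝓝 (f 0)) := by
      refine (f.continuous.tendsto _).comp ?_
      have : Tendsto (fun n : ℕ => ((0 : X), 1 / ((n : ℝ) + 1))) atTop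
          (𝓝 ((0 : X), (0 : ℝ))) :=
        Tendsto.prodMk_nhds tendsto_const_nhds tendsto_one_div_add_atTop_nhds_zero_nat
      simpa [Prod.mk_zero_zero] using this
    rw [map_zero] at hlim
    refine le_of_tendsto hlim ?_
    filter_upwards with n
    exact (hfu _ (subset_closure (zero_mem_Cset hgx (by positivity)))).le
  have hf0 : ∀ p ∈ Cset G x gx, f p ≤ 0 := by
    intro p hp
    by_contra hpos
    push_neg at hpos
    obtain ⟨n, hn⟩ := exists_nat_gt (u / f p)
    have hsc := scale_Cset hp (show (0 : ℝ) < n + 1 by positivity)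
    have heq : f (((n : ℝ) + 1) • p) = ((n : ℝ) + 1) * f p := by
      rw [map_smul, smul_eq_mul]
    have hlt := hfu _ (subset_closure hsc)
    rw [heq] at hlt
    have h1 : u / f p < (n : ℝ) + 1 := hn.trans (lt_add_one _)
    have h2 : u < ((n : ℝ) + 1) * f p := by
      rw [div_lt_iff₀ hpos] at h1; linarith
    linarith
  exact ⟨f, hf0, hu0.trans_lt huq⟩

lemma decomp (f : (X × ℝ) →L[ℝ] ℝ) (h : X) (r : ℝ) :
    f (h, r) = f (h, 0) + r * f (0, 1) := by
  have : (h, r) = ((h, (0 : ℝ)) : X × ℝ) + r • ((0 : X), (1 : ℝ)) := by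
    simp [Prod.ext_iff]
  rw [this, map_add, map_smul, smul_eq_mul]

/-- From a separating functional with negative vertical component, build a subgradient. -/
lemma subgrad_of_sep {G : X → EReal} {x : X} {gx : ℝ} (hGbot : ∀ z, G z ≠ ⊥)
    (hgx : G x = (gx : EReal)) (f : (X × ℝ) →L[ℝ] ℝ)
    (hf0 : ∀ p ∈ Cset G x gx, f p ≤ 0) (hs : f ((0 : X), (1 : ℝ)) < 0) :
    ∃ w : X →L[ℝ] ℝ, w ∈ subdiff G x ∧
      ∀ h : X, w h = (-(f ((0 : X), (1 : ℝ))))⁻¹ * f (h, 0) := by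
  set s := f ((0 : X), (1 : ℝ)) with hs_def
  set w : X →L[ℝ] ℝ := (-s)⁻¹ • (f.comp (ContinuousLinearMap.inl ℝ X ℝ)) with hw_def
  have hwh : ∀ h : X, w h = (-s)⁻¹ * f (h, 0) := by
    intro h
    simp [hw_def, ContinuousLinearMap.smul_apply, ContinuousLinearMap.comp_apply,
      ContinuousLinearMap.inl_apply]
  refine ⟨w, ?_, hwh⟩
  refine mem_subdiff_of_le_Cset hGbot hgx ?_
  intro p hp
  have h1 := hf0 p hp
  rw [show p = (p.1, p.2) from rfl, decomp f p.1 p.2, ← hs_def] at h1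
  rw [hwh]
  have hns : 0 < -s := by linarith
  rw [inv_mul_le_iff₀ hns]
  nlinarith

end Stmt8Aux

open Stmt8Aux in
/-- On a reflexive space, for convex `G` and `x ∈ dom G`:
`G^↓(x; 0) = 0` iff `∂G(x) ≠ ∅`; in this case
`G^↓(x; h) = sup { ⟨w, h⟩ : w ∈ ∂G(x) }` for all `h`. -/
theorem stmt8 {X : Type*} [NormedAddCommGroup X] [NormedSpace ℝ X]
    (hrefl : IsReflexiveSpace X)
    (G : X → EReal) (hGbot : ∀ z, G z ≠ ⊥) (hGconv : ERealConvex G)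
    (x : X) (hx : G x ≠ ⊤) :
    (weakFirstSub G x 0 = 0 ↔ (subdiff G x).Nonempty) ∧
    ((subdiff G x).Nonempty →
      ∀ h : X, weakFirstSub G x h =
        sSup { r : EReal | ∃ w ∈ subdiff G x, r = ((w h : ℝ) : EReal) }) := by
  classical
  obtain ⟨gx, hgx⟩ : ∃ gx : ℝ, G x = (gx : EReal) :=
    ⟨(G x).toReal, (EReal.coe_toReal hx (hGbot x)).symm⟩
  have hconv : Convex ℝ (Cset G x gx) := convex_Cset hGbot hGconv hgx
  -- weakFirstSub G x 0 ≤ 0 always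
  have hle0 : weakFirstSub G x 0 ≤ 0 := by
    rw [weakFirstSub]
    refine sInf_le ⟨fun k => 1 / (k + 1), fun _ => 0, fun k => by positivity,
      tendsto_one_div_add_atTop_nhds_zero_nat, fun ψ => by simpa using tendsto_const_nhds, ?_⟩
    have hz : ∀ k : ℕ, (((1 / ((k : ℝ) + 1))⁻¹ : ℝ) : EReal) *
        (G (x + (1 / ((k : ℝ) + 1)) • (0 : X)) - G x) = 0 := by
      intro k
      rw [smul_zero, add_zero, hgx, ← EReal.coe_sub, sub_self, EReal.coe_zero, mul_zero]
    simp only [hz]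
    exact (liminf_const 0).symm
  -- part 1, backward
  have key2 : (subdiff G x).Nonempty → weakFirstSub G x 0 = 0 := by
    rintro ⟨w, hw⟩
    refine le_antisymm hle0 ?_
    have := wfs_ge hGbot hgx hw 0
    simpa using this
  -- part 1, forward
  have key1 : weakFirstSub G x 0 = 0 → (subdiff G x).Nonempty := by
    intro h0
    have hnc : ((0 : X), (-1 : ℝ)) ∉ closure (Cset G x gx) := by
      intro hmem
      have hle := wfs_le_of_closure hGbot hGconv hgx hmem
      rw [h0] at hle
      have : (0 : ℝ) ≤ (-1 : ℝ) := by exact_mod_cast hle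
      linarith
    obtain ⟨f, hf0, hfq⟩ := sep hgx hconv hnc
    have hd := decomp f 0 (-1)
    have hzero : f ((0 : X), (0 : ℝ)) = 0 := by
      have : ((0 : X), (0 : ℝ)) = (0 : X × ℝ) := rfl
      rw [this, map_zero]
    rw [hzero, zero_add] at hd
    have hs : f ((0 : X), (1 : ℝ)) < 0 := by
      rw [hd] at hfq; linarith
    obtain ⟨w, hw, _⟩ := subgrad_of_sep hGbot hgx f hf0 hs
    exact ⟨w, hw⟩
  refine ⟨⟨key1, key2⟩, ?_⟩
  rintro ⟨w₀, hw₀⟩ h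
  set T := {r : EReal | ∃ w ∈ subdiff G x, r = ((w h : ℝ) : EReal)} with hT_def
  refine le_antisymm ?_ ?_
  · -- weakFirstSub ≤ sSup T
    by_contra hcon
    push_neg at hcon
    obtain ⟨c, hc1, hc2⟩ := EReal.exists_between_coe_real hcon
    have hnc : (h, c) ∉ closure (Cset G x gx) := by
      intro hmem
      exact absurd (wfs_le_of_closure hGbot hGconv hgx hmem) (not_le.2 hc2)
    obtain ⟨f, hf0, hfq⟩ := sep hgx hconv hnc
    have hs0 : f ((0 : X), (1 : ℝ)) ≤ 0 := hf0 _ (zero_mem_Cset hgx one_pos)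
    have hd := decomp f h c
    rcases hs0.lt_or_eq with hs | hs
    · obtain ⟨w, hw, hwh⟩ := subgrad_of_sep hGbot hgx f hf0 hs
      have hwT : ((w h : ℝ) : EReal) ≤ sSup T := le_sSup ⟨w, hw, rfl⟩
      have hch : c < w h := by
        rw [hwh h]
        have hns : 0 < -(f ((0 : X), (1 : ℝ))) := by linarith
        rw [inv_mul_eq_div, lt_div_iff₀ hns]
        nlinarith [hfq, hd]
      have : (c : EReal) < sSup T :=
        lt_of_lt_of_le (by exact_mod_cast hch) hwT
      exact absurd (hc1.trans this) (lt_irrefl _)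
    · -- f(0,1) = 0 case
      have hfh : 0 < f (h, 0) := by
        have h4 := hfq
        rw [hd, hs, mul_zero, add_zero] at h4
        exact h4
      have hw'le : ∀ p ∈ Cset G x gx, f (p.1, 0) ≤ 0 := by
        intro p hp
        have h5 := hf0 p hp
        rw [show p = (p.1, p.2) from rfl, decomp f p.1 p.2, hs, mul_zero, add_zero] at h5
        exact h5
      obtain ⟨n, hn⟩ := exists_nat_gt ((c - w₀ h) / f (h, 0))
      set w : X →L[ℝ] ℝ := w₀ + (n : ℝ) • (f.comp (ContinuousLinearMap.inl ℝ X ℝ))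
        with hw_def
      have hwapp : ∀ z : X, w z = w₀ z + (n : ℝ) * f (z, 0) := by
        intro z
        simp [hw_def, ContinuousLinearMap.add_apply, ContinuousLinearMap.smul_apply,
          ContinuousLinearMap.comp_apply, ContinuousLinearMap.inl_apply]
      have hwmem : w ∈ subdiff G x := by
        refine mem_subdiff_of_le_Cset hGbot hgx ?_
        intro p hp
        have h1 := subdiff_le_Cset hgx hw₀ hp
        have h2 := hw'le p hp
        rw [hwapp]
        nlinarith [Nat.cast_nonneg (α := ℝ) n]
      have hgt : c < w h := by
        rw [hwapp]
        have : (c - w₀ h) / f (h, 0) < (n : ℝ) := hn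
        rw [div_lt_iff₀ hfh] at this
        linarith
      have hwT : ((w h : ℝ) : EReal) ≤ sSup T := le_sSup ⟨w, hwmem, rfl⟩
      have : (c : EReal) < sSup T :=
        lt_of_lt_of_le (by exact_mod_cast hgt) hwT
      exact absurd (hc1.trans this) (lt_irrefl _)
  · -- sSup T ≤ weakFirstSub
    refine sSup_le ?_
    rintro r ⟨w, hw, rfl⟩
    exact wfs_ge hGbot hgx hw h

end
end

section
/- (Quadratic growth implies (NDC).) Assume x̄ ∈ dom G satisfies the quadratic growth condition: there are constants c > 0 and ε > 0 with F(x) + G(x) ≥ F(x̄) + G(x̄) + (c/2)‖x − x̄‖² for all x ∈ X with ‖x − x̄‖ ≤ ε. Then (NDC) holds: for all sequences (t_k) ⊂ (0,∞), (h_k) ⊂ X with t_k → 0, h_k ⇀* 0 and ‖h_k‖ = 1, one has liminf_{k→∞} [ (G(x̄ + t_k h_k) − G(x̄))/t_k² + ⟨F'(x̄), h_k⟩/t_k + ½ F''(x̄)h_k² ] > 0. -/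
open Filter Topology

noncomputable section

/-- The non-degeneracy condition (NDC) at `x̄`. -/
def NDC {Y : Type*} [NormedAddCommGroup Y] [NormedSpace ℝ Y]
    (G : StrongDual ℝ Y → EReal) (xbar : StrongDual ℝ Y) (F' : Y)
    (B : StrongDual ℝ Y → StrongDual ℝ Y → ℝ) : Prop :=
  ∀ (t : ℕ → ℝ) (v : ℕ → StrongDual ℝ Y),
    (∀ k, 0 < t k) → Tendsto t atTop (𝓝 0) → WeakStarConv v 0 → (∀ k, ‖v k‖ = 1) →
    0 < liminf (fun k =>
      ((((t k) ^ 2)⁻¹ : ℝ) : EReal) * (G (xbar + t k • v k) - G xbar)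
        + ((v k F' / t k : ℝ) : EReal) + ((B (v k) (v k) / 2 : ℝ) : EReal)) atTop

/-- Quadratic growth implies (NDC). -/
theorem stmt10 {Y : Type*} [NormedAddCommGroup Y] [NormedSpace ℝ Y]
    (G : StrongDual ℝ Y → EReal) (hGbot : ∀ z, G z ≠ ⊥)
    (xbar : StrongDual ℝ Y) (hxbar : G xbar ≠ ⊤)
    (F : StrongDual ℝ Y → ℝ) (F' : Y)
    (B : StrongDual ℝ Y → StrongDual ℝ Y → ℝ)
    (hB : IsBoundedBilinearMap ℝ
      (fun p : StrongDual ℝ Y × StrongDual ℝ Y => B p.1 p.2))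
    (hTaylor : ∀ (t : ℕ → ℝ) (v : ℕ → StrongDual ℝ Y) (h : StrongDual ℝ Y),
      (∀ k, 0 < t k) → Tendsto t atTop (𝓝 0) → WeakStarConv v h →
      (∀ k, G (xbar + t k • v k) ≠ ⊤) →
      Tendsto (fun k => (F (xbar + t k • v k) - F xbar - t k * v k F' -
        (t k) ^ 2 / 2 * B (v k) (v k)) / (t k) ^ 2) atTop (𝓝 0))
    (c ε : ℝ) (hc : 0 < c) (hε : 0 < ε)
    (hgrowth : ∀ z : StrongDual ℝ Y, ‖z - xbar‖ ≤ ε →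
      ((F xbar : ℝ) : EReal) + G xbar + ((c / 2 * ‖z - xbar‖ ^ 2 : ℝ) : EReal) ≤
        ((F z : ℝ) : EReal) + G z) :
    NDC G xbar F' B := by
  intro t v ht htend hw hnorm
  set A : ℕ → EReal := fun k =>
      ((((t k) ^ 2)⁻¹ : ℝ) : EReal) * (G (xbar + t k • v k) - G xbar)
        + ((v k F' / t k : ℝ) : EReal) + ((B (v k) (v k) / 2 : ℝ) : EReal) with hA
  obtain ⟨g0, hg0⟩ : ∃ g0 : ℝ, G xbar = (g0 : ℝ) :=
    ⟨(G xbar).toReal, (EReal.coe_toReal hxbar (hGbot xbar)).symm⟩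
  -- if G is ⊤ at the point, A k = ⊤
  have htop : ∀ k, G (xbar + t k • v k) = ⊤ → A k = ⊤ := by
    intro k hk
    have ht2 : (0:ℝ) < ((t k) ^ 2)⁻¹ := inv_pos.mpr (pow_pos (ht k) 2)
    simp only [hA, hk, hg0, EReal.top_sub_coe]
    rw [EReal.coe_mul_top_of_pos ht2]
    rfl
  -- norm computation
  have hnormz : ∀ k, ‖(xbar + t k • v k) - xbar‖ = t k := by
    intro k
    rw [add_sub_cancel_left, norm_smul, hnorm k, Real.norm_eq_abs,
      abs_of_pos (ht k), mul_one]
  -- key bound when G is finite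
  have hkey : ∀ k, t k ≤ ε → G (xbar + t k • v k) ≠ ⊤ →
      ((c / 2 - (F (xbar + t k • v k) - F xbar - t k * v k F' -
        (t k) ^ 2 / 2 * B (v k) (v k)) / (t k) ^ 2 : ℝ) : EReal) ≤ A k := by
    intro k hkε hktop
    set z := xbar + t k • v k with hz
    obtain ⟨g, hg⟩ : ∃ g : ℝ, G z = (g : ℝ) :=
      ⟨(G z).toReal, (EReal.coe_toReal hktop (hGbot z)).symm⟩
    have hgr := hgrowth z (by rw [hnormz k]; exact hkε)
    rw [hg0, hg, hnormz k] at hgr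
    have hgrR : F xbar + g0 + c / 2 * (t k) ^ 2 ≤ F z + g := by exact_mod_cast hgr
    have htk := ht k
    have ht2 : (0:ℝ) < (t k) ^ 2 := by positivity
    have hreal : c / 2 - (F z - F xbar - t k * v k F' -
        (t k) ^ 2 / 2 * B (v k) (v k)) / (t k) ^ 2 ≤
        ((t k) ^ 2)⁻¹ * (g - g0) + v k F' / t k + B (v k) (v k) / 2 := by
      have hkey2 : (F z - F xbar - t k * v k F' -
          (t k) ^ 2 / 2 * B (v k) (v k)) / (t k) ^ 2
          = (F z - F xbar) / (t k) ^ 2 - v k F' / t k - B (v k) (v k) / 2 := by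
        field_simp
      have h4 : c / 2 * (t k) ^ 2 - (F z - F xbar) ≤ g - g0 := by linarith
      have h3 : c / 2 - (F z - F xbar) / (t k) ^ 2 ≤ ((t k) ^ 2)⁻¹ * (g - g0) := by
        calc c / 2 - (F z - F xbar) / (t k) ^ 2
            = (c / 2 * (t k) ^ 2 - (F z - F xbar)) / (t k) ^ 2 := by
              field_simp
          _ ≤ (g - g0) / (t k) ^ 2 := (div_le_div_iff_of_pos_right ht2).mpr h4
          _ = ((t k) ^ 2)⁻¹ * (g - g0) := by rw [div_eq_inv_mul]
      rw [hkey2]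
      linarith
    have hcoe : A k = ((((t k) ^ 2)⁻¹ * (g - g0) + v k F' / t k
        + B (v k) (v k) / 2 : ℝ) : EReal) := by
      simp only [hA, hg0, hg, ← hz]
      norm_cast
    rw [hcoe]
    exact_mod_cast hreal
  -- eventually A k ≥ c/4
  have hEv : ∀ᶠ k in atTop, ((c / 4 : ℝ) : EReal) ≤ A k := by
    by_contra hcon
    rw [Filter.not_eventually] at hcon
    have hfreq : ∃ᶠ k in atTop, A k < ((c / 4 : ℝ) : EReal) := by
      simpa only [not_le] using hcon
    obtain ⟨φ, hφmono, hφ⟩ := Filter.extraction_of_frequently_atTop hfreq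
    have hφtop : Tendsto φ atTop atTop := hφmono.tendsto_atTop
    have hntop : ∀ k, G (xbar + t (φ k) • v (φ k)) ≠ ⊤ := by
      intro k hk
      have hA' := htop (φ k) hk
      exact not_top_lt (hA' ▸ hφ k)
    have hT := hTaylor (t ∘ φ) (v ∘ φ) 0 (fun k => ht (φ k))
      (htend.comp hφtop) (fun w => (hw w).comp hφtop) hntop
    have hev1 : ∀ᶠ k in atTop, (F (xbar + t (φ k) • v (φ k)) - F xbar
        - t (φ k) * v (φ k) F' - (t (φ k)) ^ 2 / 2 * B (v (φ k)) (v (φ k)))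
          / (t (φ k)) ^ 2 < c / 4 :=
      hT.eventually_lt_const (by positivity)
    have hev2 : ∀ᶠ k in atTop, t (φ k) ≤ ε :=
      ((htend.comp hφtop).eventually_lt_const hε).mono fun k hk => le_of_lt hk
    obtain ⟨k, h1, h2⟩ := (hev1.and hev2).exists
    have hb := hkey (φ k) h2 (hntop k)
    have : ((c / 4 : ℝ) : EReal) ≤ A (φ k) := by
      refine le_trans ?_ hb
      apply EReal.coe_le_coe_iff.mpr
      linarith
    exact absurd (hφ k) (not_lt.mpr this)
  have hle : ((c / 4 : ℝ) : EReal) ≤ liminf A atTop :=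
    Filter.le_liminf_of_le (by isBoundedDefault) hEv
  calc (0 : EReal) < ((c / 4 : ℝ) : EReal) := by
        exact_mod_cast EReal.coe_pos.mpr (by positivity)
    _ ≤ _ := hle

end
end

section
/- (Legendre form gives (NDC).) Suppose X is a real Hilbert space, G : X → ℝ ∪ {+∞} is convex, x̄ ∈ dom G, and −F'(x̄) ∈ ∂G(x̄). Assume that the quadratic form h ↦ F''(x̄)h² is a Legendre form, i.e. it is sequentially weakly lower semicontinuous and, for every sequence (h_k) ⊂ X, h_k ⇀ h together with F''(x̄)h_k² → F''(x̄)h² implies h_k → h in norm. Then (NDC) holds: for all sequences (t_k) ⊂ (0,∞), (h_k) ⊂ X with t_k → 0, h_k ⇀ 0 and ‖h_k‖ = 1, one has liminf_{k→∞} [ (G(x̄ + t_k h_k) − G(x̄))/t_k² + ⟨F'(x̄), h_k⟩/t_k + ½ F''(x̄)h_k² ] > 0. -/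
open Filter Topology

noncomputable section

/-- Weak convergence of a sequence in a real Hilbert space:
`⟪h_k, w⟫ → ⟪h, w⟫` for all `w`. -/
def WeakConvH {X : Type*} [NormedAddCommGroup X] [InnerProductSpace ℝ X]
    (v : ℕ → X) (h : X) : Prop :=
  ∀ w : X, Tendsto (fun k => (inner ℝ (v k) w : ℝ)) atTop (𝓝 (inner ℝ h w : ℝ))

/-- Legendre form gives (NDC). -/
theorem stmt12 {X : Type*} [NormedAddCommGroup X] [InnerProductSpace ℝ X]
    [CompleteSpace X]
    (G : X → EReal) (hGbot : ∀ z, G z ≠ ⊥) (hGconv : ERealConvex G)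
    (xbar : X) (hxbar : G xbar ≠ ⊤)
    (F' : X) (B : X → X → ℝ)
    (hB : IsBoundedBilinearMap ℝ (fun p : X × X => B p.1 p.2))
    -- `-F'(x̄) ∈ ∂G(x̄)`
    (hsub : ∀ z : X, G xbar + ((inner ℝ (-F') (z - xbar) : ℝ) : EReal) ≤ G z)
    -- `h ↦ F''(x̄)h²` is sequentially weakly lower semicontinuous
    (hlsc : ∀ (v : ℕ → X) (h : X), WeakConvH v h →
      ((B h h : ℝ) : EReal) ≤ liminf (fun k => ((B (v k) (v k) : ℝ) : EReal)) atTop)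
    -- Legendre property
    (hleg : ∀ (v : ℕ → X) (h : X), WeakConvH v h →
      Tendsto (fun k => B (v k) (v k)) atTop (𝓝 (B h h)) → Tendsto v atTop (𝓝 h)) :
    -- (NDC)
    ∀ (t : ℕ → ℝ) (v : ℕ → X),
      (∀ k, 0 < t k) → Tendsto t atTop (𝓝 0) → WeakConvH v 0 → (∀ k, ‖v k‖ = 1) →
      0 < liminf (fun k =>
        ((((t k) ^ 2)⁻¹ : ℝ) : EReal) * (G (xbar + t k • v k) - G xbar)
          + (((inner ℝ F' (v k) : ℝ) / t k : ℝ) : EReal)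
          + ((B (v k) (v k) / 2 : ℝ) : EReal)) atTop := by
  intro t v ht htend hweak hnorm
  set φ : ℕ → EReal := fun k =>
    ((((t k) ^ 2)⁻¹ : ℝ) : EReal) * (G (xbar + t k • v k) - G xbar)
      + (((inner ℝ F' (v k) : ℝ) / t k : ℝ) : EReal)
      + ((B (v k) (v k) / 2 : ℝ) : EReal) with hφ
  have hB0 : B 0 0 = 0 := by
    have h := hB.smul_left 0 0 0
    simpa using h
  -- each term dominates the quadratic part
  have key : ∀ k, ((B (v k) (v k) / 2 : ℝ) : EReal) ≤ φ k := by
    intro k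
    have htk : t k ≠ 0 := (ht k).ne'
    set a : ℝ := (inner ℝ F' (v k) : ℝ) with ha
    have hr : ((inner ℝ (-F') ((xbar + t k • v k) - xbar) : ℝ)) = -(t k * a) := by
      have : (xbar + t k • v k) - xbar = t k • v k := by abel
      rw [this, inner_neg_left, real_inner_smul_right, ha]
    have h2 : ((-(t k * a) : ℝ) : EReal) ≤ G (xbar + t k • v k) - G xbar := by
      rw [EReal.le_sub_iff_add_le (Or.inl (hGbot xbar)) (Or.inl hxbar), add_comm]
      have h := hsub (xbar + t k • v k)
      rwa [hr] at h
    have h3 : (((((t k) ^ 2)⁻¹ : ℝ) * (-(t k * a)) : ℝ) : EReal)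
        ≤ ((((t k) ^ 2)⁻¹ : ℝ) : EReal) * (G (xbar + t k • v k) - G xbar) := by
      rw [EReal.coe_mul]
      exact mul_le_mul_of_nonneg_left h2 (EReal.coe_nonneg.2 (by positivity))
    have h4 : (((t k) ^ 2)⁻¹ : ℝ) * (-(t k * a)) = -(a / t k) := by
      field_simp
    rw [h4] at h3
    have h1 : (0 : EReal) ≤ ((((t k) ^ 2)⁻¹ : ℝ) : EReal) * (G (xbar + t k • v k) - G xbar)
        + ((a / t k : ℝ) : EReal) := by
      calc (0 : EReal) = ((-(a / t k) : ℝ) : EReal) + ((a / t k : ℝ) : EReal) := by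
            norm_cast; ring
        _ ≤ _ := add_le_add h3 le_rfl
    calc ((B (v k) (v k) / 2 : ℝ) : EReal)
        = 0 + ((B (v k) (v k) / 2 : ℝ) : EReal) := (zero_add _).symm
      _ ≤ _ := add_le_add h1 le_rfl
  by_contra hcon
  push_neg at hcon
  -- extract a subsequence along which φ is small
  have hfreq : ∀ n : ℕ, ∃ᶠ k in atTop, φ k < (((((n : ℝ) + 1)⁻¹ : ℝ)) : EReal) := by
    intro n
    have hpos : (0 : EReal) < ((((n : ℝ) + 1)⁻¹ : ℝ) : EReal) :=
      EReal.coe_pos.2 (by positivity)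
    exact frequently_lt_of_liminf_lt (h := lt_of_le_of_lt hcon hpos)
  obtain ⟨ψ, hψ, hψP⟩ := Filter.extraction_forall_of_frequently hfreq
  set b : ℕ → ℝ := fun n => B (v (ψ n)) (v (ψ n)) with hb
  have hwψ : WeakConvH (fun n => v (ψ n)) 0 := fun w => (hweak w).comp hψ.tendsto_atTop
  have hbound : ∀ n, b n ≤ 2 * ((n : ℝ) + 1)⁻¹ := by
    intro n
    have h := lt_of_le_of_lt (key (ψ n)) (hψP n)
    have h' := EReal.coe_lt_coe_iff.mp h
    simp only [hb]
    linarith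
  have hlin : (0 : EReal) ≤ liminf (fun n => ((b n : ℝ) : EReal)) atTop := by
    have h := hlsc (fun n => v (ψ n)) 0 hwψ
    rw [hB0] at h
    simpa using h
  have hauxtend : Tendsto (fun n : ℕ => ((2 * ((n : ℝ) + 1)⁻¹ : ℝ) : EReal)) atTop
      (𝓝 (0 : EReal)) := by
    have h1 : Tendsto (fun n : ℕ => ((n : ℝ) + 1)⁻¹) atTop (𝓝 0) :=
      tendsto_inv_atTop_zero.comp
        (tendsto_atTop_add_const_right _ 1 tendsto_natCast_atTop_atTop)
    have h2 : Tendsto (fun n : ℕ => 2 * ((n : ℝ) + 1)⁻¹) atTop (𝓝 0) := by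
      simpa using h1.const_mul 2
    have := (EReal.tendsto_coe (a := (0 : ℝ))).2 h2
    simpa using this
  have hup : limsup (fun n => ((b n : ℝ) : EReal)) atTop ≤ 0 := by
    calc limsup (fun n => ((b n : ℝ) : EReal)) atTop
        ≤ limsup (fun n : ℕ => ((2 * ((n : ℝ) + 1)⁻¹ : ℝ) : EReal)) atTop :=
          limsup_le_limsup (Eventually.of_forall fun n => EReal.coe_le_coe_iff.2 (hbound n))
      _ = 0 := hauxtend.limsup_eq
  have hle : liminf (fun n => ((b n : ℝ) : EReal)) atTop
      ≤ limsup (fun n => ((b n : ℝ) : EReal)) atTop := liminf_le_limsup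
  have hinf0 : liminf (fun n => ((b n : ℝ) : EReal)) atTop = 0 :=
    le_antisymm (hle.trans hup) hlin
  have hsup0 : limsup (fun n => ((b n : ℝ) : EReal)) atTop = 0 :=
    le_antisymm hup (hlin.trans hle)
  have htendE : Tendsto (fun n => ((b n : ℝ) : EReal)) atTop (𝓝 (0 : EReal)) :=
    tendsto_of_liminf_eq_limsup hinf0 hsup0
  have htendb : Tendsto b atTop (𝓝 (0 : ℝ)) := by
    have := (EReal.tendsto_coe (a := (0 : ℝ))).1 (by simpa using htendE)
    exact this
  have hvconv : Tendsto (fun n => v (ψ n)) atTop (𝓝 (0 : X)) := by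
    apply hleg (fun n => v (ψ n)) 0 hwψ
    rw [hB0]
    exact htendb
  have hnormconv : Tendsto (fun n => ‖v (ψ n)‖) atTop (𝓝 (0 : ℝ)) := by
    simpa using hvconv.norm
  have hone : Tendsto (fun n : ℕ => (1 : ℝ)) atTop (𝓝 (0 : ℝ)) := by
    convert hnormconv using 1
    ext n
    rw [hnorm (ψ n)]
  have := tendsto_nhds_unique hone tendsto_const_nhds
  norm_num at this
end
end
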